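/- arXiv:1503.08942 — 3 statements merged into one kernel-verified Lean document; each statement's English description precedes it below -/
import Mathlib

section
/- Let x, z ∈ Sₙ. Then x ≤ z in the Bruhat order if and only if for every i ∈ {1,…,n} and every j ∈ {1,…,n}, the number of indices k ≤ i with x(k) ≤ j is greater than or equal to the number of indices k ≤ i with z(k) ≤ j. -/
open Equiv

/-! ### Permutations: adjacent transpositions, Coxeter length, Bruhat order -/

/-- `s` is an adjacent transposition `(i, i+1)` in `S_n` (values `0`-indexed). -/
def IsAdjTrans {n : ℕ} (s : Perm (Fin n)) : Prop :=
  ∃ (i : ℕ) (h : i + 1 < n), s = Equiv.swap ⟨i, Nat.lt_of_succ_lt h⟩ ⟨i + 1, h⟩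

/-- Coxeter length: the minimal number of adjacent transpositions in a factorization. -/
noncomputable def permLength {n : ℕ} (x : Perm (Fin n)) : ℕ :=
  sInf {k | ∃ l : List (Perm (Fin n)), l.length = k ∧ (∀ s ∈ l, IsAdjTrans s) ∧ l.prod = x}

/-- Strict Bruhat order: generated by `u < t * u` for transpositions `t`
increasing the length. -/
def BruhatLT {n : ℕ} (x z : Perm (Fin n)) : Prop :=
  Relation.TransGen
    (fun u v => ∃ t : Perm (Fin n), t.IsSwap ∧ v = t * u ∧ permLength u < permLength v) x z

/-- Bruhat order (reflexive version). -/
def BruhatLE {n : ℕ} (x z : Perm (Fin n)) : Prop := x = z ∨ BruhatLT x z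

/-! ### Partitions -/

/-- A partition: an antitone, finitely supported function `ℕ → ℕ`
(the part `αᵢ` of the paper is `f (i-1)`; rows are `0`-indexed). -/
structure Partn where
  f : ℕ → ℕ
  antitone' : Antitone f
  finite_supp : ∃ N, ∀ i, N ≤ i → f i = 0

/-- `p` is a partition of `n`. -/
def PartnOf (p : Partn) (n : ℕ) : Prop :=
  ∃ N, (∀ i, N ≤ i → p.f i = 0) ∧ ∑ i ∈ Finset.range N, p.f i = n

/-- The partial sum `α₁ + ⋯ + α_j` of the first `j` parts. -/
def psum (p : Partn) (j : ℕ) : ℕ := ∑ i ∈ Finset.range j, p.f i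

/-- The set of block boundaries `α₁, α₁+α₂, …` (`1`-indexed positions). -/
def Bdry (p : Partn) : Set ℕ := {m | ∃ j, 1 ≤ j ∧ m = psum p j}

/-- `S^α`: permutations whose values within each block of `α` occur in increasing
order of position.  Values are `0`-indexed: value `v` is the paper's value `v+1`,
and `v`, `v+1` lie in the same block iff `v+1 ∉ Bdry α`. -/
def SAset (α : Partn) {n : ℕ} (x : Perm (Fin n)) : Prop :=
  ∀ (v : ℕ) (h : v + 1 < n), (v + 1) ∉ Bdry α →
    x⁻¹ ⟨v, Nat.lt_of_succ_lt h⟩ < x⁻¹ ⟨v + 1, h⟩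

/-- Containment of partitions. -/
def PartnSub (γ β : Partn) : Prop := ∀ i, γ.f i ≤ β.f i

/-- The transpose (conjugate) partition: `β'_j = #{i : βᵢ ≥ j}` (columns `0`-indexed). -/
noncomputable def ptranspose (p : Partn) (j : ℕ) : ℕ := Set.ncard {i | j < p.f i}

/-- `β∖γ` is a vertical strip: `βᵢ ≤ γᵢ + 1` for all `i`. -/
def VertStrip (β γ : Partn) : Prop := ∀ i, β.f i ≤ γ.f i + 1

/-- `β∖γ` is a horizontal strip: `β'∖γ'` is a vertical strip. -/
def HorizStrip (β γ : Partn) : Prop := ∀ j, ptranspose β j ≤ ptranspose γ j + 1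

/-- A rook strip is a horizontal and vertical strip. -/
def RookStrip (β γ : Partn) : Prop := VertStrip β γ ∧ HorizStrip β γ

/-- The boxes of the skew diagram `β∖γ` (row, column), `0`-indexed. -/
def SkewCells (β γ : Partn) : Set (ℕ × ℕ) := {c | γ.f c.1 ≤ c.2 ∧ c.2 < β.f c.1}

/-! ### Fillings of skew diagrams -/

/-- A filling of the skew diagram `β∖γ` with content `α`: each box gets an entry
`≥ 1`, and there are `α_u` entries equal to `u` (the paper's `αᵤ` is `α.f (u-1)`). -/
structure SkFilling (α β γ : Partn) where
  entry : ℕ × ℕ → ℕ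
  zero_outside : ∀ c, c ∉ SkewCells β γ → entry c = 0
  pos_inside : ∀ c ∈ SkewCells β γ, 1 ≤ entry c
  content : ∀ u : ℕ, 1 ≤ u → Set.ncard {c ∈ SkewCells β γ | entry c = u} = α.f (u - 1)

/-- The Littlewood–Richardson conditions: rows weakly increase, columns strictly
increase, and the lattice permutation property holds. -/
def IsLRF {α β γ : Partn} (F : SkFilling α β γ) : Prop :=
  (∀ i j j' : ℕ, (i, j) ∈ SkewCells β γ → (i, j') ∈ SkewCells β γ → j ≤ j' →
      F.entry (i, j) ≤ F.entry (i, j')) ∧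
  (∀ i i' j : ℕ, (i, j) ∈ SkewCells β γ → (i', j) ∈ SkewCells β γ → i < i' →
      F.entry (i, j) < F.entry (i', j)) ∧
  (∀ u c : ℕ, 2 ≤ u →
      Set.ncard {p ∈ SkewCells β γ | c ≤ p.2 ∧ F.entry p = u} ≤
      Set.ncard {p ∈ SkewCells β γ | c ≤ p.2 ∧ F.entry p = u - 1})

/-- Row `i` of the partition `γ⁽ᵘ⁾`: the boxes of `γ` together with the boxes of
`β∖γ` whose entry is at most `u`. -/
noncomputable def regionRow {α β γ : Partn} (F : SkFilling α β γ) (u i : ℕ) : ℕ :=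
  γ.f i + Set.ncard {j | (i, j) ∈ SkewCells β γ ∧ F.entry (i, j) ≤ u}

/-- Dominance order on fillings: `Z ≤_dom X` iff `δ⁽ᵘ⁾ ≤_dom γ⁽ᵘ⁾` for every `u`. -/
def DomLE {α β γ : Partn} (Z X : SkFilling α β γ) : Prop :=
  ∀ u j : ℕ, ∑ i ∈ Finset.range j, regionRow Z u i ≤ ∑ i ∈ Finset.range j, regionRow X u i

/-- A single sorting swap: exchange two out-of-order entries within a row
(left entry bigger) or within a column (upper entry bigger). -/
def SortSwap (β γ : Partn) (W Z : ℕ × ℕ → ℕ) : Prop :=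
  ∃ p q : ℕ × ℕ, p ∈ SkewCells β γ ∧ q ∈ SkewCells β γ ∧
    ((p.1 = q.1 ∧ p.2 < q.2) ∨ (p.2 = q.2 ∧ p.1 < q.1)) ∧
    W q < W p ∧
    Z = Function.update (Function.update W p (W q)) q (W p)

/-- `Z` is obtained from `X` by a decreasing box move: two entries of `X` are
exchanged so that the smaller entry is in the lower position after the exchange,
and then rows and columns are re-sorted if necessary. -/
def BoxMove {α β γ : Partn} (X Z : SkFilling α β γ) : Prop :=
  ∃ p q : ℕ × ℕ, p ∈ SkewCells β γ ∧ q ∈ SkewCells β γ ∧ p.1 < q.1 ∧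
    X.entry p < X.entry q ∧
    Relation.ReflTransGen (SortSwap β γ)
      (Function.update (Function.update X.entry p (X.entry q)) q (X.entry p)) Z.entry

/-- The box order on LR-fillings: generated by decreasing box moves. -/
def LeBox {α β γ : Partn} (Z X : SkFilling α β γ) : Prop :=
  Relation.ReflTransGen (fun Y W => IsLRF Y ∧ IsLRF W ∧ BoxMove W Y) Z X

/-! ### Reading words and standardization -/

/-- The block (paper entry, `1`-indexed) containing the `0`-indexed value `v`. -/
noncomputable def blockIdx (α : Partn) (v : ℕ) : ℕ := sInf {u | v < psum α u}

/-- `e` enumerates the boxes of the rook strip `β∖γ` from top right to bottom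
left, i.e. in increasing order of rows. -/
def IsRowRead (β γ : Partn) {n : ℕ} (e : Fin n → ℕ × ℕ) : Prop :=
  (∀ k, e k ∈ SkewCells β γ) ∧ Function.Injective e ∧
  (∀ c ∈ SkewCells β γ, ∃ k, e k = c) ∧
  ∀ k l : Fin n, k < l → (e k).1 < (e l).1

/-- `e` enumerates the boxes of `β∖γ` column by column from left to right, each
column read from bottom to top (the reading order of the word `ω`). -/
def IsColRead (β γ : Partn) {n : ℕ} (e : Fin n → ℕ × ℕ) : Prop :=
  (∀ k, e k ∈ SkewCells β γ) ∧ Function.Injective e ∧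
  (∀ c ∈ SkewCells β γ, ∃ k, e k = c) ∧
  ∀ k l : Fin n, k < l →
    (e k).2 < (e l).2 ∨ ((e k).2 = (e l).2 ∧ (e l).1 < (e k).1)

/-- `p` is the standardization `π(F)` of the reading word of the filling `F`
with respect to the reading enumeration `e`: position `k` receives a value in the
block corresponding to the entry of the `k`-th box, and equal entries receive
their values in reading order. -/
def IsStdOf (α : Partn) {β γ : Partn} {n : ℕ} (F : SkFilling α β γ)
    (e : Fin n → ℕ × ℕ) (p : Perm (Fin n)) : Prop :=
  (∀ k : Fin n, blockIdx α (p k) = F.entry (e k)) ∧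
  ∀ k l : Fin n, k < l → F.entry (e k) = F.entry (e l) → p k < p l

/-- The `α`-recording tableau of `x` is standard: the entries `x⁻¹(psum α u + j)`
increase along rows and down columns of the shape `α` (rows `0`-indexed). -/
def RecStd (α : Partn) {n : ℕ} (x : Perm (Fin n)) : Prop :=
  (∀ u j j' : ℕ, j < j' → j' < α.f u →
    ∀ (h : psum α u + j < n) (h' : psum α u + j' < n),
      x⁻¹ ⟨psum α u + j, h⟩ < x⁻¹ ⟨psum α u + j', h'⟩) ∧
  (∀ u u' j : ℕ, u < u' → j < α.f u' →
    ∀ (h : psum α u + j < n) (h' : psum α u' + j < n),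
      x⁻¹ ⟨psum α u + j, h⟩ < x⁻¹ ⟨psum α u' + j, h'⟩)

/-- Covering relation of the box order on LR-fillings. -/
def CovBox {α β γ : Partn} (X Y : SkFilling α β γ) : Prop :=
  IsLRF X ∧ IsLRF Y ∧ LeBox X Y ∧ X ≠ Y ∧
    ∀ W, IsLRF W → LeBox X W → LeBox W Y → W = X ∨ W = Y

/-- The decreasing block `(i, i-1, …, 1)`. -/
def descBlock (i : ℕ) : List ℕ := ((List.range i).reverse).map (· + 1)


/-!
Encode a permutation `x` by its corner counts `x[i, j] = #{k ≤ i | x k ≤ j}`. For `p < q` with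
`x p < x q`, right multiplication by `swap p q` lowers `x[i, j]` by one on the rectangle
`[p, q) × [x p, x q)` and leaves it unchanged elsewhere, and it raises the length (the number of
inversions). So Bruhat steps can only lower corner counts. Conversely, if the counts of `z` are
below those of `x ≠ z`, let `i` be the first position where they differ: then `x i < z i`, and
swapping `i` with the first later position `m` with `x m ∈ (x i, z i]` is a Bruhat step whose
rectangle lies where the counts of `z` are strictly below those of `x`; induct on `∑ x[i, j]`.
-/

open Finset

section

variable {n : ℕ}

namespace Equiv.Perm

def inversions (x : Perm (Fin n)) : Finset (Fin n × Fin n) :=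
  {c | c.1 < c.2 ∧ x c.2 < x c.1}

@[simp]
lemma mem_inversions {x : Perm (Fin n)} {c : Fin n × Fin n} :
    c ∈ x.inversions ↔ c.1 < c.2 ∧ x c.2 < x c.1 := by
  simp [inversions]

@[simp]
lemma inversions_one : (1 : Perm (Fin n)).inversions = ∅ := by
  ext c
  simpa using le_of_lt

/-- Left multiplication by `swap a (a + 1)` preserves the relative order of every other pair of
values, so it only adds the inversion formed by the positions of `a` and `a + 1`. -/
lemma card_inversions_swap_mul_of_lt {a b : Fin n} (hab : (b : ℕ) = a + 1) {x : Perm (Fin n)}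
    (h : x⁻¹ a < x⁻¹ b) : #(swap a b * x).inversions = #x.inversions + 1 := by
  have hinj : ∀ k l, x k = x l → k = l := fun _ _ => x.injective.eq_iff.mp
  have ha : x (x⁻¹ a) = a := x.apply_symm_apply a
  have hb : x (x⁻¹ b) = b := x.apply_symm_apply b
  have : (swap a b * x).inversions = insert (x⁻¹ a, x⁻¹ b) x.inversions := by
    ext ⟨k, l⟩
    simp only [mem_inversions, mem_insert, Prod.mk.injEq, mul_apply, swap_apply_def]
    grind
  rw [this, card_insert_of_notMem]
  simp only [mem_inversions, ha, hb, not_and, not_lt]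
  exact fun _ => Fin.le_iff_val_le_val.mpr (by omega)

lemma eq_one_of_strictMono {x : Perm (Fin n)} (hx : StrictMono x) : x = 1 :=
  Equiv.ext fun _ => le_antisymm hx.apply_le hx.le_apply

/-- Exchanges `p` and `q` in a pair whose other entry lies outside `[p, q]`, and fixes every
other pair. For `p < q` and `x p < x q` it injects the inversions of `x` into those of
`x * swap p q` other than `(p, q)`. -/
def inversionTransfer (p q : Fin n) (c : Fin n × Fin n) : Fin n × Fin n :=
  if c.2 = p then (c.1, q)
  else if c.1 = q then (p, c.2)
  else if c.1 = p ∧ q < c.2 then (q, c.2)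
  else if c.2 = q ∧ c.1 < p then (c.1, p)
  else c

lemma inversionTransfer_inversionTransfer {p q : Fin n} (hpq : p < q) {c : Fin n × Fin n}
    (hc : c.1 < c.2) : inversionTransfer p q (inversionTransfer p q c) = c := by
  obtain ⟨u, v⟩ := c
  simp only [inversionTransfer] at *
  split_ifs <;> grind

lemma inversionTransfer_mem_inversions_mul_swap {p q : Fin n} (hpq : p < q) {x : Perm (Fin n)}
    (hx : x p < x q) {c : Fin n × Fin n} (hc : c ∈ x.inversions) :
    inversionTransfer p q c ∈ (x * swap p q).inversions.erase (p, q) := by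
  obtain ⟨u, v⟩ := c
  have hinj : ∀ k l, x k = x l → k = l := fun _ _ => x.injective.eq_iff.mp
  simp only [mem_inversions, mem_erase, inversionTransfer, mul_apply, swap_apply_def] at *
  split_ifs <;> grind

lemma card_inversions_lt_mul_swap {p q : Fin n} (hpq : p < q) {x : Perm (Fin n)}
    (hx : x p < x q) : #x.inversions < #(x * swap p q).inversions := by
  have hpq_mem : (p, q) ∈ (x * swap p q).inversions := by simpa using ⟨hpq, hx⟩
  calc #x.inversions
      ≤ #((x * swap p q).inversions.erase (p, q)) := by
        refine card_le_card_of_injOn _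
          (fun c hc => inversionTransfer_mem_inversions_mul_swap hpq hx hc) fun c hc d hd hcd => ?_
        rw [← inversionTransfer_inversionTransfer hpq (mem_inversions.mp hc).1,
          ← inversionTransfer_inversionTransfer hpq (mem_inversions.mp hd).1]
        exact congrArg _ hcd
    _ < #(x * swap p q).inversions := card_erase_lt_of_mem hpq_mem

end Equiv.Perm

open Equiv.Perm

lemma IsAdjTrans.mul_self {s : Perm (Fin n)} (hs : IsAdjTrans s) : s * s = 1 := by
  obtain ⟨i, h, rfl⟩ := hs
  exact swap_mul_self _ _

lemma IsAdjTrans.card_inversions_mul {s : Perm (Fin n)} (hs : IsAdjTrans s) (x : Perm (Fin n)) :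
    #(s * x).inversions = #x.inversions + 1 ∨ #x.inversions = #(s * x).inversions + 1 := by
  obtain ⟨i, h, rfl⟩ := hs
  set a : Fin n := ⟨i, Nat.lt_of_succ_lt h⟩
  set b : Fin n := ⟨i + 1, h⟩
  have hab : a ≠ b := Fin.ne_of_val_ne (by simp [a, b])
  rcases lt_or_gt_of_ne (x⁻¹.injective.ne hab) with hlt | hgt
  · exact Or.inl (card_inversions_swap_mul_of_lt rfl hlt)
  · right
    have := card_inversions_swap_mul_of_lt (x := swap a b * x) (a := a) (b := b) rfl
      (by simpa [mul_inv_rev, swap_inv] using hgt)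
    rwa [swap_mul_self_mul] at this

lemma IsAdjTrans.card_inversions_mul_le {s : Perm (Fin n)} (hs : IsAdjTrans s)
    (x : Perm (Fin n)) : #(s * x).inversions ≤ #x.inversions + 1 := by
  rcases hs.card_inversions_mul x with h | h <;> omega

lemma exists_isAdjTrans_card_inversions_mul {x : Perm (Fin n)} (hx : x ≠ 1) :
    ∃ s, IsAdjTrans s ∧ #(s * x).inversions + 1 = #x.inversions := by
  obtain _ | m := n
  · exact absurd (Subsingleton.elim x 1) hx
  have hmono : ¬StrictMono (⇑x⁻¹) := fun h => hx (inv_eq_one.mp (eq_one_of_strictMono h))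
  rw [Fin.strictMono_iff_lt_succ] at hmono
  simp only [not_forall, not_lt] at hmono
  obtain ⟨i, hi⟩ := hmono
  set s := swap i.castSucc i.succ
  have hs : IsAdjTrans s := ⟨i, i.succ.2, rfl⟩
  refine ⟨s, hs, ?_⟩
  have hlt : (s * x)⁻¹ i.castSucc < (s * x)⁻¹ i.succ := by
    simp only [s, mul_inv_rev, swap_inv, mul_apply, swap_apply_left, swap_apply_right]
    exact lt_of_le_of_ne hi (x⁻¹.injective.ne Fin.castSucc_lt_succ.ne')
  have := card_inversions_swap_mul_of_lt rfl hlt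
  rw [swap_mul_self_mul] at this
  exact this.symm

lemma card_inversions_prod_le {l : List (Perm (Fin n))} (hl : ∀ s ∈ l, IsAdjTrans s) :
    #l.prod.inversions ≤ l.length := by
  induction l with
  | nil => simp
  | cons s l ih =>
    rw [List.prod_cons, List.length_cons]
    have := (hl s List.mem_cons_self).card_inversions_mul_le l.prod
    have := ih fun t ht => hl t (List.mem_cons_of_mem s ht)
    omega

lemma exists_isAdjTrans_prod_eq (x : Perm (Fin n)) :
    ∃ l : List (Perm (Fin n)),
      l.length = #x.inversions ∧ (∀ s ∈ l, IsAdjTrans s) ∧ l.prod = x := by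
  induction h : #x.inversions using Nat.strong_induction_on generalizing x with
  | _ k ih =>
    by_cases hx : x = 1
    · subst hx
      exact ⟨[], by simp_all⟩
    obtain ⟨s, hs, hcard⟩ := exists_isAdjTrans_card_inversions_mul hx
    obtain ⟨l, hlen, hl, hprod⟩ := ih _ (by omega) (s * x) rfl
    refine ⟨s :: l, by simp; omega, ?_, ?_⟩
    · exact fun t ht => (List.mem_cons.mp ht).elim (· ▸ hs) (hl t)
    · rw [List.prod_cons, hprod, ← mul_assoc, hs.mul_self, one_mul]

lemma permLength_eq_card_inversions (x : Perm (Fin n)) : permLength x = #x.inversions := by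
  obtain ⟨l, hlen, hl, hprod⟩ := exists_isAdjTrans_prod_eq x
  refine le_antisymm (Nat.sInf_le ⟨l, hlen, hl, hprod⟩) ?_
  refine le_csInf ⟨_, l, hlen, hl, hprod⟩ ?_
  rintro k ⟨l', rfl, hl', rfl⟩
  exact card_inversions_prod_le hl'

lemma permLength_lt_mul_swap {p q : Fin n} (hpq : p < q) {x : Perm (Fin n)} (hx : x p < x q) :
    permLength x < permLength (x * swap p q) := by
  simpa only [permLength_eq_card_inversions] using card_inversions_lt_mul_swap hpq hx

namespace Equiv.Perm

def cornerCount (x : Perm (Fin n)) (i j : Fin n) : ℕ :=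
  #{k | k ≤ i ∧ x k ≤ j}

lemma cornerCount_mul_swap {p q : Fin n} (hpq : p < q) {x : Perm (Fin n)} (hx : x p < x q)
    (r s : Fin n) :
    (x * swap p q).cornerCount r s +
        (if p ≤ r ∧ r < q ∧ x p ≤ s ∧ s < x q then 1 else 0) = x.cornerCount r s := by
  let F : Fin n → ℕ := fun k => if swap p q k ≤ r ∧ x k ≤ s then 1 else 0
  let G : Fin n → ℕ := fun k => if k ≤ r ∧ x k ≤ s then 1 else 0
  have hF : (x * swap p q).cornerCount r s = ∑ k, F k := by
    rw [cornerCount, card_filter, ← Equiv.sum_comp (swap p q)]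
    simp [F]
  have hFG : ∑ k ∈ {p, q}ᶜ, F k = ∑ k ∈ {p, q}ᶜ, G k := by
    refine sum_congr rfl fun k hk => ?_
    simp only [mem_compl, mem_insert, mem_singleton, not_or] at hk
    simp [F, G, swap_apply_of_ne_of_ne hk.1 hk.2]
  rw [hF, cornerCount, card_filter, ← sum_add_sum_compl {p, q} F, ← sum_add_sum_compl {p, q},
    hFG, sum_pair hpq.ne, sum_pair hpq.ne]
  simp only [F, swap_apply_left, swap_apply_right]
  split_ifs <;> grind

lemma cornerCount_mul_swap_le {p q : Fin n} (hpq : p < q) {x : Perm (Fin n)} (hx : x p < x q)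
    (r s : Fin n) : (x * swap p q).cornerCount r s ≤ x.cornerCount r s := by
  have := cornerCount_mul_swap hpq hx r s
  omega

lemma cornerCount_mul_swap_lt {p q : Fin n} (hpq : p < q) {x : Perm (Fin n)} (hx : x p < x q) :
    (x * swap p q).cornerCount p (x p) < x.cornerCount p (x p) := by
  have := cornerCount_mul_swap hpq hx p (x p)
  rw [if_pos ⟨le_rfl, hpq, le_rfl, hx⟩] at this
  omega

lemma cornerCount_add_card_filter (x : Perm (Fin n)) {r s b : Fin n} (hsb : s ≤ b) :
    x.cornerCount r s + #{k | k ≤ r ∧ s < x k ∧ x k ≤ b} = x.cornerCount r b := by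
  rw [cornerCount, cornerCount, ← card_union_of_disjoint]
  · congr 1
    ext k
    simp only [mem_union, mem_filter, mem_univ, true_and]
    grind
  · exact disjoint_filter.mpr fun k _ h h' => (not_lt.mpr h.2) h'.2.1

variable {x z : Perm (Fin n)}

lemma apply_lt_of_cornerCount_le (hdom : ∀ r s, z.cornerCount r s ≤ x.cornerCount r s)
    {i : Fin n} (hagree : ∀ k < i, x k = z k) (hne : x i ≠ z i) : x i < z i := by
  by_contra hge
  have hsub : ({k | k ≤ i ∧ x k ≤ z i} : Finset (Fin n)) ⊂
      ({k | k ≤ i ∧ z k ≤ z i} : Finset (Fin n)) := by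
    refine (ssubset_iff_of_subset fun k => ?_).mpr ⟨i, ?_, ?_⟩
    all_goals simp only [mem_filter, mem_univ, true_and]
    · grind
    · exact ⟨le_rfl, le_rfl⟩
    · grind
  exact (card_lt_card hsub).not_ge (hdom i (z i))

lemma cornerCount_lt_of_cornerCount_le (hdom : ∀ r s, z.cornerCount r s ≤ x.cornerCount r s)
    {i m : Fin n} (hagree : ∀ k < i, x k = z k)
    (hmin : ∀ k, i < k → k < m → ¬(x i < x k ∧ x k ≤ z i))
    {r s : Fin n} (hir : i ≤ r) (hrm : r < m) (hxs : x i ≤ s) (hsz : s < z i) :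
    z.cornerCount r s < x.cornerCount r s := by
  have hsub : ({k | k ≤ r ∧ s < x k ∧ x k ≤ z i} : Finset (Fin n)) ⊂
      ({k | k ≤ r ∧ s < z k ∧ z k ≤ z i} : Finset (Fin n)) := by
    refine (ssubset_iff_of_subset fun k => ?_).mpr ⟨i, ?_, ?_⟩
    all_goals simp only [mem_filter, mem_univ, true_and]
    · grind
    · exact ⟨hir, hsz, le_rfl⟩
    · grind
  have := card_lt_card hsub
  have := x.cornerCount_add_card_filter (r := r) hsz.le
  have := z.cornerCount_add_card_filter (r := r) hsz.le
  have := hdom r (z i)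
  omega

lemma exists_mul_swap_of_cornerCount_le (hxz : x ≠ z)
    (hdom : ∀ r s, z.cornerCount r s ≤ x.cornerCount r s) :
    ∃ p q, p < q ∧ x p < x q ∧
      ∀ r s, z.cornerCount r s ≤ (x * swap p q).cornerCount r s := by
  obtain ⟨i, hi, hfirst⟩ := wellFounded_lt.has_min {k | x k ≠ z k}
    (not_forall.mp fun h => hxz (Equiv.ext h))
  have hagree : ∀ k < i, x k = z k := fun k hk => not_not.mp fun h => hfirst k h hk
  have hlt := apply_lt_of_cornerCount_le hdom hagree hi
  have hright : i < x⁻¹ (z i) := by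
    have hx : x (x⁻¹ (z i)) = z i := x.apply_symm_apply _
    have hagree' := hagree (x⁻¹ (z i))
    have hinj : ∀ k, z k = z i → k = i := fun k => z.injective.eq_iff.mp
    grind
  obtain ⟨m, ⟨him, hxm, hmz⟩, hmin⟩ :=
    wellFounded_lt.has_min {k | i < k ∧ x i < x k ∧ x k ≤ z i}
      ⟨x⁻¹ (z i), hright, by simpa using hlt, by simp⟩
  refine ⟨i, m, him, hxm, fun r s => ?_⟩
  have hswap := cornerCount_mul_swap him hxm r s
  split_ifs at hswap with hrect
  · obtain ⟨hir, hrm, hxs, hsm⟩ := hrect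
    have := cornerCount_lt_of_cornerCount_le hdom hagree
      (fun k hik hkm hk => hmin k ⟨hik, hk⟩ hkm) hir hrm hxs (hsm.trans_le hmz)
    omega
  · exact (hdom r s).trans_eq hswap.symm

end Equiv.Perm

lemma cornerCount_mul_swap_le_of_permLength_lt {u : Perm (Fin n)} {p q : Fin n} (hpq : p ≠ q)
    (hlen : permLength u < permLength (u * swap p q)) (i j : Fin n) :
    (u * swap p q).cornerCount i j ≤ u.cornerCount i j := by
  wlog hlt : p < q generalizing p q
  · rw [swap_comm] at hlen ⊢
    exact this hpq.symm hlen (lt_of_le_of_ne (not_lt.mp hlt) hpq.symm)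
  rcases lt_or_gt_of_ne (u.injective.ne hpq) with hx | hx
  · exact cornerCount_mul_swap_le hlt hx i j
  · have hy : (u * swap p q) p < (u * swap p q) q := by simpa using hx
    have := permLength_lt_mul_swap hlt hy
    rw [mul_swap_mul_self] at this
    exact absurd hlen (lt_asymm this)

lemma cornerCount_le_of_bruhat_step {u v : Perm (Fin n)}
    (h : ∃ t : Perm (Fin n), t.IsSwap ∧ v = t * u ∧ permLength u < permLength v)
    (i j : Fin n) : v.cornerCount i j ≤ u.cornerCount i j := by
  obtain ⟨t, ⟨a, b, hab, rfl⟩, rfl, hlen⟩ := h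
  rw [swap_mul_eq_mul_swap] at hlen ⊢
  exact cornerCount_mul_swap_le_of_permLength_lt (u⁻¹.injective.ne hab) hlen i j

lemma BruhatLE.cornerCount_le {x z : Perm (Fin n)} (h : BruhatLE x z) (i j : Fin n) :
    z.cornerCount i j ≤ x.cornerCount i j := by
  rcases h with rfl | h
  · exact le_rfl
  induction h with
  | single h => exact cornerCount_le_of_bruhat_step h i j
  | tail _ h ih => exact (cornerCount_le_of_bruhat_step h i j).trans ih

lemma bruhatLT_mul_swap {p q : Fin n} (hpq : p < q) {x : Perm (Fin n)} (hx : x p < x q) :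
    BruhatLT x (x * swap p q) :=
  .single ⟨swap (x p) (x q), ⟨_, _, x.injective.ne hpq.ne, rfl⟩, mul_swap_eq_swap_mul x p q,
    permLength_lt_mul_swap hpq hx⟩

theorem bruhatLE_of_cornerCount_le {x z : Perm (Fin n)}
    (h : ∀ i j, z.cornerCount i j ≤ x.cornerCount i j) : BruhatLE x z := by
  by_cases hxz : x = z
  · exact .inl hxz
  obtain ⟨p, q, hpq, hx, hdom⟩ := exists_mul_swap_of_cornerCount_le hxz h
  have hstep := bruhatLT_mul_swap hpq hx
  rcases bruhatLE_of_cornerCount_le hdom with heq | hlt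
  · exact .inr (heq ▸ hstep)
  · exact .inr (hstep.trans hlt)
termination_by ∑ c : Fin n × Fin n, x.cornerCount c.1 c.2
decreasing_by
  exact sum_lt_sum (fun c _ => cornerCount_mul_swap_le hpq hx _ _)
    ⟨(p, x p), mem_univ _, cornerCount_mul_swap_lt hpq hx⟩

end

/-- `x ≤ z` in Bruhat order iff for every `i`, `j`, the number of
positions `k ≤ i` with `x(k) ≤ j` is at least the corresponding number for `z`. -/
theorem stmt2 (n : ℕ) (x z : Perm (Fin n)) :
    BruhatLE x z ↔
      ∀ i j : Fin n,
        (Finset.univ.filter fun k : Fin n => k ≤ i ∧ z k ≤ j).card ≤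
        (Finset.univ.filter fun k : Fin n => k ≤ i ∧ x k ≤ j).card :=
  ⟨BruhatLE.cornerCount_le, bruhatLE_of_cornerCount_le⟩
end

section
/- Let α, β, γ be partitions with γ ⊆ β such that β∖γ is a rook strip (i.e., both a horizontal and a vertical strip). For LR-fillings X, Z of shape β∖γ and content α, Z ≤_box X if and only if Z ≤_dom X. -/
open Equiv

/-!
In a rook strip the only possible box of row `i` is `(i, γ.f i)`, and the boxes move strictly
to the left from top to bottom. A filling is thus determined by its row word (`0` for rows
without a box): the row and column conditions of an LR-filling are vacuous, the lattice
condition becomes the lattice property of the word, a box move becomes a transposition of two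
letters putting the smaller one first, and dominance becomes the inequality of all prefix counts
`#{t < m | 1 ≤ w t ≤ u}`. A box move only raises these counts, so `≤_box` implies `≤_dom`.

Conversely let `z ≠ x` be lattice words of equal content with `z` dominated by `x`. At the first
position `k` where they differ, `x k < z k`; let `j` be the first later position with
`x k ≤ z j < z k`, and `i` the last position in `[k, j)` with `z k ≤ z i` such that all prefix
counts raised by swapping `z i` and `z j` are still strictly below those of `x`. Then the swapped
word is again a lattice word dominated by `x`, and it has a smaller weight `∑ (M - t) * w t`, so
iterating reaches `x`.
-/

namespace Nat

variable {p : ℕ → Prop} [DecidablePred p]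

theorem count_eq_count_of_forall_not {a b : ℕ} (hab : a ≤ b) (h : ∀ t, a ≤ t → t < b → ¬ p t) :
    count p b = count p a := by
  refine le_antisymm ?_ (count_monotone p hab)
  by_contra! hlt
  obtain ⟨t, ht, hpt⟩ := exists_of_count_lt_count hlt
  exact h t ht.1 ht.2 hpt

theorem exists_count_succ_eq {a b r : ℕ} (ha : count p a ≤ r) (hb : r < count p b) :
    ∃ t, a ≤ t ∧ t < b ∧ p t ∧ count p (t + 1) = r + 1 := by
  induction b with
  | zero => simp at hb
  | succ b ih =>
    by_cases hr : r < count p b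
    · obtain ⟨t, hat, htb, ht⟩ := ih hr
      exact ⟨t, hat, htb.trans (lt_add_one b), ht⟩
    · rw [count_succ] at hb
      have hpb : p b := by
        by_contra h
        rw [if_neg h] at hb
        omega
      rw [if_pos hpb] at hb
      have hab : a ≤ b := by
        by_contra! h
        have := count_monotone p h
        rw [count_succ, if_pos hpb] at this
        omega
      exact ⟨b, hab, lt_add_one b, hpb, by rw [count_succ, if_pos hpb]; omega⟩

theorem count_comp_swap_add {i j : ℕ} (hij : i < j) (m : ℕ) :
    count (fun t => p (swap i j t)) m + (if i < m ∧ m ≤ j ∧ p i then 1 else 0) =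
      count p m + (if i < m ∧ m ≤ j ∧ p j then 1 else 0) := by
  induction m with
  | zero => simp
  | succ m ih =>
    rw [count_succ, count_succ, swap_apply_def]
    split_ifs at ih ⊢ <;> simp_all <;> omega

end Nat

theorem swap_apply_graph {ι κ : Type*} [DecidableEq ι] [DecidableEq κ] (g : ι → κ) (i j t : ι) :
    swap (i, g i) (j, g j) (t, g t) = (swap i j t, g (swap i j t)) := by
  rcases eq_or_ne t i with rfl | hti
  · simp
  rcases eq_or_ne t j with rfl | htj
  · simp
  rw [swap_apply_of_ne_of_ne hti htj, swap_apply_of_ne_of_ne (by simp [hti]) (by simp [htj])]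

theorem swap_apply_mem_iff {ι : Type*} [DecidableEq ι] {S : Set ι} {p q : ι} (hp : p ∈ S)
    (hq : q ∈ S) (c : ι) : swap p q c ∈ S ↔ c ∈ S := by
  rcases eq_or_ne c p with rfl | hcp
  · simp [hp, hq]
  rcases eq_or_ne c q with rfl | hcq
  · simp [hp, hq]
  rw [swap_apply_of_ne_of_ne hcp hcq]

theorem sum_weight_comp_swap_lt {w : ℕ → ℕ} {i j M : ℕ} (hij : i < j) (hjM : j < M)
    (hji : w j < w i) :
    ∑ t ∈ Finset.range M, (M - t) * w (swap i j t) < ∑ t ∈ Finset.range M, (M - t) * w t := by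
  have hsplit : ∀ f : ℕ → ℕ, ∑ t ∈ Finset.range M, f t =
      f i + f j + ∑ t ∈ ((Finset.range M).erase i).erase j, f t := fun f => by
    rw [add_assoc, Finset.add_sum_erase _ _ (Finset.mem_erase.2 ⟨hij.ne', Finset.mem_range.2 hjM⟩),
      Finset.add_sum_erase _ _ (Finset.mem_range.2 (hij.trans hjM))]
  have hrest : ∑ t ∈ ((Finset.range M).erase i).erase j, (M - t) * w (swap i j t) =
      ∑ t ∈ ((Finset.range M).erase i).erase j, (M - t) * w t :=
    Finset.sum_congr rfl fun t ht => by
      rw [swap_apply_of_ne_of_ne (Finset.ne_of_mem_erase (Finset.mem_of_mem_erase ht))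
        (Finset.ne_of_mem_erase ht)]
  rw [hsplit, hsplit (fun t => (M - t) * w t), hrest, swap_apply_left, swap_apply_right]
  have : M - j < M - i := by omega
  nlinarith

namespace LatticeWord

/-- Words are maps `ℕ → ℕ` in which the letter `0` is a blank: `IsLattice` and `WordDomLE` only
look at the letters `≥ 1`. -/
def letterCount (w : ℕ → ℕ) (a b m : ℕ) : ℕ := Nat.count (fun t => a ≤ w t ∧ w t ≤ b) m

def IsLattice (w : ℕ → ℕ) : Prop :=
  ∀ v m, 1 ≤ v → letterCount w (v + 1) (v + 1) m ≤ letterCount w v v m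

def WordDomLE (z x : ℕ → ℕ) : Prop := ∀ u m, letterCount z 1 u m ≤ letterCount x 1 u m

variable {w x z : ℕ → ℕ}

theorem letterCount_succ (a b m : ℕ) :
    letterCount w a b (m + 1) = letterCount w a b m + if a ≤ w m ∧ w m ≤ b then 1 else 0 :=
  Nat.count_succ _ _

theorem letterCount_mono {a b m m' : ℕ} (h : m ≤ m') : letterCount w a b m ≤ letterCount w a b m' :=
  Nat.count_monotone _ h

theorem letterCount_add {a b c : ℕ} (hab : a ≤ b + 1) (hbc : b ≤ c) (m : ℕ) :
    letterCount w a b m + letterCount w (b + 1) c m = letterCount w a c m := by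
  induction m with
  | zero => simp [letterCount]
  | succ m ih =>
    simp only [letterCount_succ]
    split_ifs <;> omega

theorem letterCount_congr {a b m : ℕ} (h : ∀ t < m, z t = x t) :
    letterCount z a b m = letterCount x a b m := by
  simp only [letterCount, Nat.count_eq_card_filter_range]
  exact congrArg Finset.card (Finset.filter_congr fun t ht => by rw [h t (Finset.mem_range.1 ht)])

theorem letterCount_eq_of_forall_not {a b m m' : ℕ} (hm : m ≤ m')
    (h : ∀ t, m ≤ t → t < m' → ¬ (a ≤ w t ∧ w t ≤ b)) :
    letterCount w a b m' = letterCount w a b m :=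
  Nat.count_eq_count_of_forall_not hm h

theorem letterCount_eq_zero_of_lt {a b : ℕ} (h : b < a) (m : ℕ) : letterCount w a b m = 0 :=
  Nat.count_of_forall_not fun _ _ ht => by omega

theorem letterCount_eq_of_letterCount_singleton_eq {m : ℕ}
    (h : ∀ v, 1 ≤ v → letterCount z v v m = letterCount x v v m) {a : ℕ} (ha : 1 ≤ a) (b : ℕ) :
    letterCount z a b m = letterCount x a b m := by
  induction b with
  | zero => rw [letterCount_eq_zero_of_lt ha, letterCount_eq_zero_of_lt ha]
  | succ b ih =>
    rcases lt_trichotomy (b + 1) a with hba | rfl | hab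
    · rw [letterCount_eq_zero_of_lt hba, letterCount_eq_zero_of_lt hba]
    · exact h _ ha
    · rw [← letterCount_add (w := z) (by omega) (Nat.le_succ b),
        ← letterCount_add (w := x) (by omega) (Nat.le_succ b), ih, h _ (by omega)]

theorem letterCount_comp_swap_add {i j : ℕ} (hij : i < j) (a b m : ℕ) :
    letterCount (w ∘ swap i j) a b m + (if i < m ∧ m ≤ j ∧ a ≤ w i ∧ w i ≤ b then 1 else 0) =
      letterCount w a b m + (if i < m ∧ m ≤ j ∧ a ≤ w j ∧ w j ≤ b then 1 else 0) :=
  Nat.count_comp_swap_add (p := fun t => a ≤ w t ∧ w t ≤ b) hij m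

theorem wordDomLE_comp_swap_self {i j : ℕ} (hij : i < j) (hi : 1 ≤ w i) (hle : w i ≤ w j) :
    WordDomLE (w ∘ swap i j) w := by
  intro u m
  have := letterCount_comp_swap_add (w := w) hij 1 u m
  split_ifs at this <;> omega

/-- The prefix counts of `z` raised by one when the letters at `i < j` are swapped lie strictly
below those of `x`. -/
def HasSwapSlack (z x : ℕ → ℕ) (i j : ℕ) : Prop :=
  ∀ u m, z j ≤ u → u < z i → i < m → m ≤ j → letterCount z 1 u m < letterCount x 1 u m

theorem wordDomLE_comp_swap {i j : ℕ} (hdom : WordDomLE z x) (hij : i < j)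
    (hji : z j < z i) (hslack : HasSwapSlack z x i j) : WordDomLE (z ∘ swap i j) x := by
  intro u m
  have h := letterCount_comp_swap_add (w := z) hij 1 u m
  by_cases hwin : z j ≤ u ∧ u < z i ∧ i < m ∧ m ≤ j
  · have := hslack u m hwin.1 hwin.2.1 hwin.2.2.1 hwin.2.2.2
    split_ifs at h <;> omega
  · have := hdom u m
    split_ifs at h <;> omega

theorem isLattice_comp_swap {i j : ℕ} (hz : IsLattice z) (hij : i < j) (hji : z j < z i)
    (hlow : ∀ m, i < m → m ≤ j → ∀ v, 1 ≤ v → z j = v + 1 →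
      letterCount z (v + 1) (v + 1) m < letterCount z v v m)
    (hup : ∀ m, i < m → m ≤ j →
      letterCount z (z i + 1) (z i + 1) m < letterCount z (z i) (z i) m) :
    IsLattice (z ∘ swap i j) := by
  intro v m hv
  have hv1 := letterCount_comp_swap_add (w := z) hij (v + 1) (v + 1) m
  have hv0 := letterCount_comp_swap_add (w := z) hij v v m
  have hlat := hz v m hv
  by_cases hwin : i < m ∧ m ≤ j
  · by_cases hvj : v + 1 = z j
    · have := hlow m hwin.1 hwin.2 v hv hvj.symm
      split_ifs at hv1 hv0 <;> omega
    by_cases hvi : v = z i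
    · have := hup m hwin.1 hwin.2
      rw [← hvi] at this
      split_ifs at hv1 hv0 <;> omega
    split_ifs at hv1 hv0 <;> omega
  · split_ifs at hv1 hv0 <;> omega

theorem one_le_and_lt_of_first_diff {k : ℕ} (hdom : WordDomLE z x) (hzero : z k = 0 ↔ x k = 0)
    (hagree : ∀ t < k, z t = x t) (hne : z k ≠ x k) : 1 ≤ x k ∧ x k < z k := by
  have h := hdom (z k) (k + 1)
  rw [letterCount_succ, letterCount_succ, letterCount_congr hagree] at h
  have : z k ≠ 0 := fun h0 => hne (by rw [h0, hzero.1 h0])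
  split_ifs at h <;> omega

theorem exists_letter_between {k M : ℕ} (hM : ∀ t, M ≤ t → x t = 0)
    (hcont : ∀ a b, 1 ≤ a → letterCount z a b M = letterCount x a b M)
    (hagree : ∀ t < k, z t = x t) (hk : 1 ≤ x k) (hkz : x k < z k) :
    ∃ t, k < t ∧ x k ≤ z t ∧ z t < z k := by
  have hkM : k < M := by
    by_contra h
    have := hM k (by omega)
    omega
  have hlt : letterCount z (x k) (z k - 1) (k + 1) < letterCount z (x k) (z k - 1) M :=
    calc letterCount z (x k) (z k - 1) (k + 1) = letterCount x (x k) (z k - 1) k := by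
          rw [letterCount_succ, if_neg (by omega), letterCount_congr hagree, add_zero]
      _ < letterCount x (x k) (z k - 1) (k + 1) := by
          rw [letterCount_succ, if_pos ⟨le_rfl, by omega⟩]
          omega
      _ ≤ letterCount x (x k) (z k - 1) M := letterCount_mono hkM
      _ = letterCount z (x k) (z k - 1) M := (hcont _ _ hk).symm
  obtain ⟨t, ht, hzt⟩ := Nat.exists_of_count_lt_count hlt
  exact ⟨t, ht.1, hzt.1, by omega⟩

theorem hasSwapSlack_first_diff {k j : ℕ} (hdom : WordDomLE z x) (hagree : ∀ t < k, z t = x t)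
    (hk : 1 ≤ x k) (hxj : x k ≤ z j) (hgap : ∀ t, k ≤ t → t < j → ¬ (x k ≤ z t ∧ z t < z k)) :
    HasSwapSlack z x k j := by
  intro u m hju huk hkm hmj
  have hz : letterCount z (x k) u m = letterCount x (x k) u k := by
    rw [← letterCount_congr hagree]
    exact letterCount_eq_of_forall_not hkm.le
      fun t h1 h2 h3 => hgap t h1 (by omega) ⟨h3.1, by omega⟩
  have hx : letterCount x (x k) u k < letterCount x (x k) u m := by
    have := letterCount_mono (w := x) (a := x k) (b := u) hkm
    rw [letterCount_succ, if_pos ⟨le_rfl, by omega⟩] at this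
    omega
  have hz' := letterCount_add (w := z) (a := 1) (b := x k - 1) (c := u) (by omega) (by omega) m
  have hx' := letterCount_add (w := x) (a := 1) (b := x k - 1) (c := u) (by omega) (by omega) m
  rw [Nat.sub_add_cancel hk] at hz' hx'
  have := hdom (x k - 1) m
  omega

theorem letterCount_lt_of_gap {k j v m : ℕ} (hx : IsLattice x) (hz : IsLattice z)
    (hagree : ∀ t < k, z t = x t) (hxj : x k ≤ z j) (hjk : z j < z k)
    (hgap : ∀ t, k ≤ t → t < j → ¬ (x k ≤ z t ∧ z t < z k)) (hv : 1 ≤ v) (hjv : z j = v + 1)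
    (hkm : k < m) (hmj : m ≤ j) :
    letterCount z (v + 1) (v + 1) m < letterCount z v v m := by
  have hconst : ∀ u m₁ m₂, x k ≤ u → u < z k → k ≤ m₁ → m₁ ≤ m₂ → m₂ ≤ j →
      letterCount z u u m₂ = letterCount z u u m₁ := fun u m₁ m₂ h1 h2 h3 h4 h5 =>
    letterCount_eq_of_forall_not h4 fun t ht1 ht2 ht =>
      hgap t (by omega) (by omega) ⟨by omega, by omega⟩
  -- Either both letters `v`, `v + 1` are absent from `[k, j)` and the lattice property of `z`
  -- at `j` applies, or `v + 1 = x k` and the lattice property of `x` at `k` is inherited by `z`.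
  rcases le_or_gt (x k) v with hxv | hxv
  · have h := hz v (j + 1) hv
    rw [letterCount_succ, letterCount_succ, if_pos (by omega), if_neg (by omega)] at h
    rw [hconst (v + 1) m j (by omega) (by omega) hkm.le hmj le_rfl,
      hconst v m j hxv (by omega) hkm.le hmj le_rfl] at h
    omega
  · have h := hx v (k + 1) hv
    rw [letterCount_succ, letterCount_succ, if_pos (by omega), if_neg (by omega),
      ← letterCount_congr hagree, ← letterCount_congr hagree] at h
    have := letterCount_mono (w := z) (a := v) (b := v) hkm.le
    rw [hconst (v + 1) k m (by omega) (by omega) le_rfl hkm.le hmj]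
    omega

theorem exists_tight_of_not_hasSwapSlack {i t j : ℕ} (hdom : WordDomLE z x)
    (hi : HasSwapSlack z x i j) (hit : i < t) (ht : ¬ HasSwapSlack z x t j) :
    ∃ u m, z i ≤ u ∧ u < z t ∧ t < m ∧ m ≤ j ∧ letterCount z 1 u m = letterCount x 1 u m := by
  simp only [HasSwapSlack, not_forall, not_lt] at ht
  obtain ⟨u, m, hju, hut, htm, hmj, hle⟩ := ht
  refine ⟨u, m, ?_, hut, htm, hmj, le_antisymm (hdom u m) hle⟩
  by_contra! hui
  exact absurd (hi u m hju hui (hit.trans htm) hmj) (not_lt.2 hle)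

theorem letterCount_lt_of_maximal {i j m : ℕ} (hx : IsLattice x) (hz : IsLattice z)
    (hdom : WordDomLE z x) (hji : z j < z i) (hi : HasSwapSlack z x i j)
    (hmax : ∀ t, i < t → t < j → z i ≤ z t → ¬ HasSwapSlack z x t j) (him : i < m) (hmj : m ≤ j) :
    letterCount z (z i + 1) (z i + 1) m < letterCount z (z i) (z i) m := by
  have hnone : ∀ t, i < t → t < j → z t ≠ z i := by
    intro t hit htj hzt
    obtain ⟨u, -, hiu, hut, -⟩ :=
      exists_tight_of_not_hasSwapSlack hdom hi hit (hmax t hit htj hzt.ge)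
    omega
  have hcount : ∀ m', i < m' → m' ≤ j →
      letterCount z (z i) (z i) m' = letterCount z (z i) (z i) i + 1 := by
    intro m' h1 h2
    rw [letterCount_eq_of_forall_not h1 fun t h3 h4 h5 =>
      hnone t (by omega) (by omega) (by omega), letterCount_succ, if_pos ⟨le_rfl, le_rfl⟩]
  by_contra! hfail
  have h0 : letterCount z (z i + 1) (z i + 1) (i + 1) ≤ letterCount z (z i) (z i) i := by
    rw [letterCount_succ, if_neg (by omega), add_zero]
    exact hz (z i) i (by omega)
  rw [hcount m him hmj] at hfail
  obtain ⟨p, hip, hpm, hzp, hp⟩ := Nat.exists_count_succ_eq h0 hfail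
  obtain ⟨u, m', hiu, hup, hpm', hm'j, htight⟩ :=
    exists_tight_of_not_hasSwapSlack hdom hi (by omega) (hmax p (by omega) (by omega) (by omega))
  have hu : u = z i := by omega
  subst hu
  -- At `m'` the counts of letters `≤ z i` in `z` and `x` agree while those `< z i` do not, so
  -- `z` has more letters `z i` than `x`; dominance at `z i + 1` and the lattice property of `x`
  -- then leave `z` fewer letters `z i + 1` than `z i` before `m'`, against the choice of `p`.
  have hp' : letterCount z (z i + 1) (z i + 1) (p + 1) = letterCount z (z i) (z i) i + 1 := hp
  have hslack := hi (z i - 1) m' (by omega) (by omega) (by omega) hm'j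
  have hz₁ := letterCount_add (w := z) (a := 1) (b := z i - 1) (c := z i) (by omega) (by omega) m'
  have hx₁ := letterCount_add (w := x) (a := 1) (b := z i - 1) (c := z i) (by omega) (by omega) m'
  rw [Nat.sub_add_cancel (by omega)] at hz₁ hx₁
  have hz₂ := letterCount_add (w := z) (a := 1) (b := z i) (c := z i + 1) (by omega) (by omega) m'
  have hx₂ := letterCount_add (w := x) (a := 1) (b := z i) (c := z i + 1) (by omega) (by omega) m'
  have := hdom (z i + 1) m'
  have := hx (z i) m' (by omega)
  have := hcount m' (by omega) hm'j
  have := letterCount_mono (w := z) (a := z i + 1) (b := z i + 1) (show p + 1 ≤ m' by omega)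
  omega

theorem exists_swap_of_wordDomLE {M : ℕ} (hx : IsLattice x) (hz : IsLattice z)
    (hzero : ∀ t, z t = 0 ↔ x t = 0) (hM : ∀ t, M ≤ t → x t = 0)
    (hcont : ∀ a b, 1 ≤ a → letterCount z a b M = letterCount x a b M)
    (hdom : WordDomLE z x) (hne : z ≠ x) :
    ∃ i j, i < j ∧ 1 ≤ z j ∧ z j < z i ∧ IsLattice (z ∘ swap i j) ∧
      WordDomLE (z ∘ swap i j) x := by
  classical
  have hexk : ∃ k, z k ≠ x k := Function.ne_iff.1 hne
  obtain ⟨k, hkne, hagree⟩ : ∃ k, z k ≠ x k ∧ ∀ t < k, z t = x t :=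
    ⟨Nat.find hexk, Nat.find_spec hexk, fun t ht => not_not.1 (Nat.find_min hexk ht)⟩
  obtain ⟨hk, hkz⟩ := one_le_and_lt_of_first_diff hdom (hzero k) hagree hkne
  have hexj := exists_letter_between hM hcont hagree hk hkz
  obtain ⟨j, ⟨hkj, hxj, hjk⟩, hjmin⟩ : ∃ j, (k < j ∧ x k ≤ z j ∧ z j < z k) ∧
      ∀ t < j, ¬ (k < t ∧ x k ≤ z t ∧ z t < z k) :=
    ⟨Nat.find hexj, Nat.find_spec hexj, fun t ht => Nat.find_min hexj ht⟩
  have hgap : ∀ t, k ≤ t → t < j → ¬ (x k ≤ z t ∧ z t < z k) := by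
    intro t hkt htj h
    rcases hkt.eq_or_lt with rfl | hkt
    · omega
    · exact hjmin t htj ⟨hkt, h⟩
  let P t := k ≤ t ∧ t < j ∧ z k ≤ z t ∧ HasSwapSlack z x t j
  have hPk : P k := ⟨le_rfl, hkj, le_rfl, hasSwapSlack_first_diff hdom hagree hk hxj hgap⟩
  obtain ⟨i, ⟨hki, hij, hzi, hi⟩, hPmax⟩ : ∃ i, P i ∧ ∀ t, i < t → t ≤ j → ¬ P t :=
    ⟨Nat.findGreatest P j, Nat.findGreatest_spec hkj.le hPk,
      fun t h1 h2 => Nat.findGreatest_is_greatest h1 h2⟩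
  have hmax : ∀ t, i < t → t < j → z i ≤ z t → ¬ HasSwapSlack z x t j :=
    fun t hit htj hzt hs => hPmax t hit htj.le ⟨by omega, htj, hzi.trans hzt, hs⟩
  refine ⟨i, j, hij, by omega, by omega, ?_, wordDomLE_comp_swap hdom hij (by omega) hi⟩
  exact isLattice_comp_swap hz hij (by omega)
    (fun m him hmj v hv hjv =>
      letterCount_lt_of_gap hx hz hagree hxj hjk hgap hv hjv (by omega) hmj)
    (fun m him hmj => letterCount_lt_of_maximal hx hz hdom (by omega) hi hmax him hmj)

end LatticeWord

section RookStripGeometry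

variable {α β γ : Partn}

theorem Partn.finite_setOf_lt (p : Partn) (j : ℕ) : {i | j < p.f i}.Finite := by
  obtain ⟨N, hN⟩ := p.finite_supp
  refine (Set.finite_Iio N).subset fun i hi => ?_
  by_contra h
  simp only [Set.mem_ofPred_eq, hN i (not_lt.1 h)] at hi
  omega

theorem mem_skewCells_iff_of_vertStrip (h : VertStrip β γ) {i j : ℕ} :
    (i, j) ∈ SkewCells β γ ↔ j = γ.f i ∧ β.f i = γ.f i + 1 := by
  have := h i
  simp only [SkewCells, Set.mem_ofPred_eq]
  omega

theorem col_lt_col_of_horizStrip (hsub : PartnSub γ β) (hh : HorizStrip β γ) {i i' : ℕ}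
    (hii : i < i') (hi : β.f i = γ.f i + 1) (hi' : β.f i' = γ.f i' + 1) : γ.f i' < γ.f i := by
  by_contra! hle
  have heq : γ.f i' = γ.f i := le_antisymm (γ.antitone' hii.le) hle
  have hi'S : i' ∉ {t | γ.f i < γ.f t} := by simp [heq]
  have hiS : i ∉ insert i' {t | γ.f i < γ.f t} := by simp [hii.ne]
  have hsubset : insert i (insert i' {t | γ.f i < γ.f t}) ⊆ {t | γ.f i < β.f t} := by
    rintro t (rfl | rfl | ht)
    · simp [hi]
    · simp [hi', heq]
    · exact lt_of_lt_of_le ht (hsub t)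
  have hcard := Set.ncard_le_ncard hsubset (β.finite_setOf_lt _)
  rw [Set.ncard_insert_of_notMem hiS ((γ.finite_setOf_lt _).insert _),
    Set.ncard_insert_of_notMem hi'S (γ.finite_setOf_lt _)] at hcard
  have := hh (γ.f i)
  simp only [ptranspose] at this
  omega

theorem exists_row_bound_of_col (cc : ℕ) :
    ∃ m, ∀ i, β.f i = γ.f i + 1 → (cc ≤ γ.f i ↔ i < m) := by
  rcases Nat.eq_zero_or_pos cc with rfl | hcc
  · obtain ⟨N, hN⟩ := β.finite_supp
    refine ⟨N, fun i hi => ⟨fun _ => ?_, fun _ => Nat.zero_le _⟩⟩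
    by_contra h
    rw [hN i (not_lt.1 h)] at hi
    omega
  · have hex : ∃ i, γ.f i < cc := by
      obtain ⟨N, hN⟩ := γ.finite_supp
      exact ⟨N, by rw [hN N le_rfl]; exact hcc⟩
    refine ⟨Nat.find hex, fun i _ => ⟨fun h => ?_, fun h => not_lt.1 (Nat.find_min hex h)⟩⟩
    by_contra hi
    exact absurd ((γ.antitone' (not_lt.1 hi)).trans_lt (Nat.find_spec hex)) (not_lt.2 h)

theorem exists_col_of_row_bound (hsub : PartnSub γ β) (hh : HorizStrip β γ) (m : ℕ) :
    ∃ cc, ∀ i, β.f i = γ.f i + 1 → (cc ≤ γ.f i ↔ i < m) := by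
  by_cases hex : ∃ i < m, β.f i = γ.f i + 1
  · obtain ⟨i, hi⟩ := hex
    let P i := i < m ∧ β.f i = γ.f i + 1
    obtain ⟨i₀, ⟨hi₀m, hi₀⟩, hmax⟩ : ∃ i₀, P i₀ ∧ ∀ i, i₀ < i → i < m → β.f i ≠ γ.f i + 1 :=
      ⟨Nat.findGreatest P m, Nat.findGreatest_spec hi.1.le hi,
        fun i h1 h2 h3 => Nat.findGreatest_is_greatest h1 h2.le ⟨h2, h3⟩⟩
    refine ⟨γ.f i₀, fun i hi => ⟨fun h => ?_, fun h => γ.antitone' ?_⟩⟩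
    · by_contra him
      exact absurd (col_lt_col_of_horizStrip hsub hh (by omega) hi₀ hi) (not_lt.2 h)
    · by_contra hlt
      exact hmax i (by omega) h hi
  · refine ⟨γ.f 0 + 1, fun i hi => ⟨fun h => ?_, fun h => absurd ⟨i, h, hi⟩ hex⟩⟩
    have := γ.antitone' (Nat.zero_le i)
    omega

end RookStripGeometry

namespace SkFilling

open LatticeWord

variable {α β γ : Partn}

def rowWord (F : SkFilling α β γ) (i : ℕ) : ℕ := F.entry (i, γ.f i)

theorem entry_injective : Function.Injective (entry : SkFilling α β γ → ℕ × ℕ → ℕ) := by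
  rintro ⟨_⟩ ⟨_⟩ h
  congr

theorem rowWord_eq_zero_iff (hv : VertStrip β γ) (F : SkFilling α β γ) (i : ℕ) :
    F.rowWord i = 0 ↔ β.f i ≠ γ.f i + 1 := by
  refine ⟨fun h hb => ?_, fun hb => F.zero_outside (i, γ.f i) fun hc =>
    hb ((mem_skewCells_iff_of_vertStrip hv).1 hc).2⟩
  have := F.pos_inside _ ((mem_skewCells_iff_of_vertStrip hv).2 ⟨rfl, hb⟩)
  rw [rowWord] at h
  omega

theorem entry_eq_rowWord (hv : VertStrip β γ) (F : SkFilling α β γ) {i j : ℕ}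
    (hc : (i, j) ∈ SkewCells β γ) : F.entry (i, j) = F.rowWord i := by
  rw [rowWord, ← ((mem_skewCells_iff_of_vertStrip hv).1 hc).1]

theorem ext_of_rowWord (hv : VertStrip β γ) {F G : SkFilling α β γ}
    (h : F.rowWord = G.rowWord) : F = G := by
  refine entry_injective (funext fun ⟨i, j⟩ => ?_)
  by_cases hc : (i, j) ∈ SkewCells β γ
  · rw [entry_eq_rowWord hv F hc, entry_eq_rowWord hv G hc, h]
  · rw [F.zero_outside _ hc, G.zero_outside _ hc]

theorem ncard_entry_eq (hv : VertStrip β γ) (F : SkFilling α β γ) {R : ℕ × ℕ → Prop}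
    {u m : ℕ} (hu : 1 ≤ u) (hR : ∀ i, β.f i = γ.f i + 1 → (R (i, γ.f i) ↔ i < m)) :
    {c ∈ SkewCells β γ | R c ∧ F.entry c = u}.ncard = letterCount F.rowWord u u m := by
  have hset : {c ∈ SkewCells β γ | R c ∧ F.entry c = u} =
      ((Finset.range m).filter fun t => u ≤ F.rowWord t ∧ F.rowWord t ≤ u).image
        fun t => (t, γ.f t) := by
    ext ⟨i, j⟩
    simp only [Set.mem_ofPred_eq, Finset.coe_image, Finset.coe_filter, Finset.mem_range,
      Set.mem_image, Prod.mk.injEq]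
    constructor
    · rintro ⟨hc, hR', hu'⟩
      obtain ⟨rfl, hb⟩ := (mem_skewCells_iff_of_vertStrip hv).1 hc
      exact ⟨i, ⟨(hR i hb).1 hR', by rw [rowWord]; omega⟩, rfl, rfl⟩
    · rintro ⟨i, ⟨him, hw⟩, rfl, rfl⟩
      have hb : β.f i = γ.f i + 1 := by
        by_contra hb
        have := (rowWord_eq_zero_iff hv F i).2 hb
        omega
      exact ⟨(mem_skewCells_iff_of_vertStrip hv).2 ⟨rfl, hb⟩, (hR i hb).2 him, by
        rw [← le_antisymm hw.2 hw.1]; rfl⟩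
  rw [hset, Set.ncard_coe_finset, Finset.card_image_of_injective _ fun a b h => congrArg Prod.fst h,
    letterCount, Nat.count_eq_card_filter_range]

theorem letterCount_rowWord_eq (hv : VertStrip β γ) (F : SkFilling α β γ) {M : ℕ}
    (hM : ∀ i, M ≤ i → β.f i = 0) {u : ℕ} (hu : 1 ≤ u) :
    letterCount F.rowWord u u M = α.f (u - 1) := by
  rw [← F.content u hu, ← ncard_entry_eq hv F (R := fun _ => True) hu]
  · simp only [true_and]
  · refine fun i hb => ⟨fun _ => ?_, fun _ => trivial⟩
    by_contra hi
    rw [hM i (not_lt.1 hi)] at hb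
    omega

theorem isLRF_iff_isLattice (hsub : PartnSub γ β) (hrook : RookStrip β γ)
    (F : SkFilling α β γ) : IsLRF F ↔ IsLattice F.rowWord := by
  constructor
  · rintro ⟨-, -, hlat⟩ v m hv
    obtain ⟨cc, hcc⟩ := exists_col_of_row_bound hsub hrook.2 m
    have := hlat (v + 1) cc (by omega)
    rwa [ncard_entry_eq hrook.1 F (by omega) hcc, Nat.add_sub_cancel,
      ncard_entry_eq hrook.1 F hv hcc] at this
  · intro hlat
    refine ⟨fun i j j' hj hj' _ => ?_, fun i i' j hj hj' hii => ?_, fun u cc hu => ?_⟩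
    · rw [((mem_skewCells_iff_of_vertStrip hrook.1).1 hj).1,
        ((mem_skewCells_iff_of_vertStrip hrook.1).1 hj').1]
    · obtain ⟨rfl, hb⟩ := (mem_skewCells_iff_of_vertStrip hrook.1).1 hj
      obtain ⟨heq, hb'⟩ := (mem_skewCells_iff_of_vertStrip hrook.1).1 hj'
      exact absurd heq (col_lt_col_of_horizStrip hsub hrook.2 hii hb hb').ne'
    · obtain ⟨m, hm⟩ := exists_row_bound_of_col (β := β) (γ := γ) cc
      obtain ⟨v, rfl⟩ : ∃ v, u = v + 1 := ⟨u - 1, by omega⟩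
      rw [ncard_entry_eq hrook.1 F (by omega) hm, Nat.add_sub_cancel,
        ncard_entry_eq hrook.1 F (by omega) hm]
      exact hlat v m (by omega)

theorem regionRow_eq (hv : VertStrip β γ) (F : SkFilling α β γ) (u i : ℕ) :
    regionRow F u i = γ.f i + if 1 ≤ F.rowWord i ∧ F.rowWord i ≤ u then 1 else 0 := by
  rw [regionRow]
  congr 1
  split_ifs with h
  · rw [Set.ncard_eq_one]
    refine ⟨γ.f i, Set.eq_singleton_iff_unique_mem.2 ⟨?_, fun j ⟨hj, _⟩ => ?_⟩⟩
    · have hb : β.f i = γ.f i + 1 := by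
        by_contra hb
        have := (rowWord_eq_zero_iff hv F i).2 hb
        omega
      exact ⟨(mem_skewCells_iff_of_vertStrip hv).2 ⟨rfl, hb⟩, h.2⟩
    · exact ((mem_skewCells_iff_of_vertStrip hv).1 hj).1
  · convert Set.ncard_empty ℕ
    refine Set.eq_empty_of_forall_notMem fun j ⟨hj, hju⟩ => h ⟨?_, ?_⟩
    · rw [← entry_eq_rowWord hv F hj]
      exact F.pos_inside _ hj
    · rwa [← entry_eq_rowWord hv F hj]

theorem domLE_iff_wordDomLE (hv : VertStrip β γ) (Z X : SkFilling α β γ) :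
    DomLE Z X ↔ WordDomLE Z.rowWord X.rowWord := by
  have hsum : ∀ (F : SkFilling α β γ) u m, ∑ i ∈ Finset.range m, regionRow F u i =
      ∑ i ∈ Finset.range m, γ.f i + letterCount F.rowWord 1 u m := by
    intro F u m
    rw [letterCount, Nat.count_eq_card_filter_range, Finset.card_filter, ← Finset.sum_add_distrib]
    exact Finset.sum_congr rfl fun i _ => regionRow_eq hv F u i
  simp only [DomLE, WordDomLE, hsum, Nat.add_le_add_iff_left]

def swapCells (F : SkFilling α β γ) {p q : ℕ × ℕ} (hp : p ∈ SkewCells β γ)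
    (hq : q ∈ SkewCells β γ) : SkFilling α β γ where
  entry := F.entry ∘ swap p q
  zero_outside c hc := F.zero_outside _ ((swap_apply_mem_iff hp hq c).not.2 hc)
  pos_inside c hc := F.pos_inside _ ((swap_apply_mem_iff hp hq c).2 hc)
  content u hu := by
    rw [← F.content u hu, ← Set.ncard_preimage_of_injective_subset_range
      (s := {c ∈ SkewCells β γ | F.entry c = u}) (swap p q).injective
      fun c _ => (swap p q).surjective c]
    congr 1
    ext c
    simp only [Set.mem_ofPred_eq, Set.mem_preimage, Function.comp_apply, swap_apply_mem_iff hp hq]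

theorem rowWord_swapCells (F : SkFilling α β γ) {i j : ℕ} (hi : (i, γ.f i) ∈ SkewCells β γ)
    (hj : (j, γ.f j) ∈ SkewCells β γ) : (F.swapCells hi hj).rowWord = F.rowWord ∘ swap i j := by
  funext t
  simp only [rowWord, swapCells, Function.comp_apply, swap_apply_graph]

theorem boxMove_swapCells (F : SkFilling α β γ) {p q : ℕ × ℕ} (hp : p ∈ SkewCells β γ)
    (hq : q ∈ SkewCells β γ) (hpq : p.1 < q.1) (hlt : F.entry q < F.entry p) :
    BoxMove (F.swapCells hp hq) F := by
  refine ⟨p, q, hp, hq, hpq, by simpa [swapCells] using hlt, ?_⟩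
  convert Relation.ReflTransGen.refl using 1
  rw [← comp_swap_eq_update, swap_comm]
  funext c
  simp [swapCells]

theorem eq_swapCells_of_boxMove (hsub : PartnSub γ β) (hrook : RookStrip β γ)
    {W Y : SkFilling α β γ} (h : BoxMove W Y) :
    ∃ i j, ∃ (hi : (i, γ.f i) ∈ SkewCells β γ) (hj : (j, γ.f j) ∈ SkewCells β γ),
      i < j ∧ W.rowWord i < W.rowWord j ∧ Y = W.swapCells hi hj := by
  obtain ⟨⟨i, a⟩, ⟨j, b⟩, hp, hq, hij, hlt, hsort⟩ := h
  obtain ⟨rfl, -⟩ := (mem_skewCells_iff_of_vertStrip hrook.1).1 hp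
  obtain ⟨rfl, -⟩ := (mem_skewCells_iff_of_vertStrip hrook.1).1 hq
  refine ⟨i, j, hp, hq, hij, hlt, entry_injective ?_⟩
  rcases Relation.ReflTransGen.cases_head_iff.1 hsort with heq | ⟨_, hswap, _⟩
  · rw [← heq, ← comp_swap_eq_update, swap_comm]
    rfl
  · obtain ⟨⟨r, c⟩, ⟨r', c'⟩, hc, hc', hline, -⟩ := hswap
    obtain ⟨rfl, hb⟩ := (mem_skewCells_iff_of_vertStrip hrook.1).1 hc
    obtain ⟨rfl, hb'⟩ := (mem_skewCells_iff_of_vertStrip hrook.1).1 hc'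
    rcases hline with ⟨rfl, hlt'⟩ | ⟨heq, hlt'⟩
    · exact absurd hlt' (lt_irrefl _)
    · exact absurd heq (col_lt_col_of_horizStrip hsub hrook.2 hlt' hb hb').ne'

end SkFilling

section BoxOrder

open SkFilling LatticeWord

variable {α β γ : Partn}

theorem DomLE.trans {X Y Z : SkFilling α β γ} (hXY : DomLE X Y) (hYZ : DomLE Y Z) : DomLE X Z :=
  fun u j => (hXY u j).trans (hYZ u j)

theorem domLE_of_boxMove (hsub : PartnSub γ β) (hrook : RookStrip β γ) {W Y : SkFilling α β γ}
    (h : BoxMove W Y) : DomLE Y W := by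
  obtain ⟨i, j, hi, hj, hij, hlt, rfl⟩ := eq_swapCells_of_boxMove hsub hrook h
  rw [domLE_iff_wordDomLE hrook.1, rowWord_swapCells]
  refine wordDomLE_comp_swap_self hij ?_ hlt.le
  rw [← entry_eq_rowWord hrook.1 W hi]
  exact W.pos_inside _ hi

theorem domLE_of_leBox (hsub : PartnSub γ β) (hrook : RookStrip β γ) {Z X : SkFilling α β γ}
    (h : LeBox Z X) : DomLE Z X := by
  induction h with
  | refl => exact fun _ _ => le_rfl
  | tail _ hstep ih => exact ih.trans (domLE_of_boxMove hsub hrook hstep.2.2)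

theorem exists_boxMove_of_domLE (hsub : PartnSub γ β) (hrook : RookStrip β γ) {M : ℕ}
    (hM : ∀ i, M ≤ i → β.f i = 0) {X Z : SkFilling α β γ} (hX : IsLRF X) (hZ : IsLRF Z)
    (hdom : DomLE Z X) (hZX : Z ≠ X) :
    ∃ Z', IsLRF Z' ∧ BoxMove Z' Z ∧ DomLE Z' X ∧
      ∑ t ∈ Finset.range M, (M - t) * Z'.rowWord t <
        ∑ t ∈ Finset.range M, (M - t) * Z.rowWord t := by
  have hzero : ∀ (F : SkFilling α β γ) t, F.rowWord t = 0 ↔ β.f t ≠ γ.f t + 1 :=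
    fun F t => rowWord_eq_zero_iff hrook.1 F t
  have hcell : ∀ t, Z.rowWord t ≠ 0 → (t, γ.f t) ∈ SkewCells β γ := fun t ht =>
    (mem_skewCells_iff_of_vertStrip hrook.1).2 ⟨rfl, not_not.1 ((hzero Z t).not.1 ht)⟩
  have hcont : ∀ a b, 1 ≤ a → letterCount Z.rowWord a b M = letterCount X.rowWord a b M :=
    fun a b ha => letterCount_eq_of_letterCount_singleton_eq (fun v hv => by
      rw [letterCount_rowWord_eq hrook.1 Z hM hv, letterCount_rowWord_eq hrook.1 X hM hv]) ha b
  obtain ⟨i, j, hij, hj, hji, hlat, hdom'⟩ := exists_swap_of_wordDomLE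
    ((isLRF_iff_isLattice hsub hrook X).1 hX) ((isLRF_iff_isLattice hsub hrook Z).1 hZ)
    (fun t => (hzero Z t).trans (hzero X t).symm)
    (fun t ht => (hzero X t).2 (by rw [hM t ht]; omega)) hcont
    ((domLE_iff_wordDomLE hrook.1 Z X).1 hdom) fun h => hZX (ext_of_rowWord hrook.1 h)
  have hi := hcell i (by omega)
  have hj' := hcell j (by omega)
  have hjM : j < M := by
    by_contra h
    exact absurd ((hzero Z j).2 (by rw [hM j (not_lt.1 h)]; omega)) (by omega)
  have hword := rowWord_swapCells Z hi hj'
  refine ⟨Z.swapCells hi hj', ?_, boxMove_swapCells Z hi hj' hij ?_, ?_, ?_⟩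
  · rw [isLRF_iff_isLattice hsub hrook, hword]
    exact hlat
  · rwa [entry_eq_rowWord hrook.1 Z hi, entry_eq_rowWord hrook.1 Z hj']
  · rw [domLE_iff_wordDomLE hrook.1, hword]
    exact hdom'
  · rw [hword]
    exact sum_weight_comp_swap_lt hij hjM hji

theorem leBox_of_domLE (hsub : PartnSub γ β) (hrook : RookStrip β γ) {X : SkFilling α β γ}
    (hX : IsLRF X) (Z : SkFilling α β γ) (hZ : IsLRF Z) (hdom : DomLE Z X) : LeBox Z X := by
  obtain ⟨M, hM⟩ := β.finite_supp
  induction hn : ∑ t ∈ Finset.range M, (M - t) * Z.rowWord t using Nat.strong_induction_on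
    generalizing Z with
  | _ n ih =>
  by_cases hZX : Z = X
  · exact hZX ▸ Relation.ReflTransGen.refl
  obtain ⟨Z', hZ', hmove, hdom', hlt⟩ := exists_boxMove_of_domLE hsub hrook hM hX hZ hdom hZX
  exact Relation.ReflTransGen.head ⟨hZ, hZ', hmove⟩ (ih _ (hn ▸ hlt) Z' hZ' hdom' rfl)

end BoxOrder

/-- main theorem: for a rook strip, the box order and the dominance
order on LR-fillings coincide. -/
theorem stmt6 (α β γ : Partn) (hsub : PartnSub γ β) (hrook : RookStrip β γ)
    (X Z : SkFilling α β γ) (hX : IsLRF X) (hZ : IsLRF Z) :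
    LeBox Z X ↔ DomLE Z X :=
  ⟨domLE_of_leBox hsub hrook, leBox_of_domLE hsub hrook hX Z hZ⟩
end

section
/- Let β∖γ be a rook strip and let X, Z be fillings of β∖γ with content α. Then Z <_dom X holds if and only if π(X) < π(Z) in the Bruhat order on Sₙ, where n = |α| and π assigns to a filling the standardization of its reading word (reading from top right to bottom left, reading the 1's as 1,…,α₁ in order, the 2's as α₁+1,…,α₁+α₂, etc.). -/
open Equiv

/-!
Both orders are compared through the rank function `rk x m v = #{k < m | x k < v}`. For the
Bruhat order this is the classical rank criterion: `x < z` iff `x ≠ z` and `rk z ≤ rk x`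
pointwise. For the hard direction, let `i` be the first position where `x` and `z` differ; then
`x i < z i`, and exchanging `x i` with the value at the nearest later position holding a value in
`(x i, z i]` is a Bruhat step from `x` that keeps the rank function above that of `z`.

For a filling read row by row, the boxes in the first `j` rows form an initial segment of the
reading word, so dominance says exactly that `rk π(Z) ≤ rk π(X)` at the thresholds
`α₁ + ⋯ + α_u`. Within a block the standardization is increasing in position, so the rank at a
threshold inside the block is `min (rank at the upper end) (rank at the lower end + offset)`, and
the inequality propagates to all thresholds.
-/

open Finset

section Rank

variable {n : ℕ}

def rk (x : Perm (Fin n)) (m v : ℕ) : ℕ := #{k : Fin n | (k : ℕ) < m ∧ (x k : ℕ) < v}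

lemma rk_le (x : Perm (Fin n)) (m v : ℕ) : rk x m v ≤ m :=
  calc rk x m v ≤ #{k : Fin n | (k : ℕ) < m} := card_le_card fun k => by simp +contextual
    _ = min n m := Fin.card_filter_val_lt
    _ ≤ m := min_le_right _ _

lemma rk_of_le (x : Perm (Fin n)) {v : ℕ} (hv : n ≤ v) (m : ℕ) : rk x m v = min n m := by
  rw [rk, ← Fin.card_filter_val_lt]
  congr 1
  ext k
  simpa using fun _ => (x k).is_lt.trans_le hv

lemma rk_succ (x : Perm (Fin n)) (k : Fin n) (v : ℕ) :
    rk x (k + 1) v = rk x k v + if (x k : ℕ) < v then 1 else 0 := by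
  rw [← Fintype.sum_ite_eq' k fun l => if (x l : ℕ) < v then 1 else 0]
  simp only [rk, card_filter, ← sum_add_distrib]
  refine sum_congr rfl fun l _ => ?_
  split_ifs <;> omega

lemma lt_iff_rk_lt_rk_succ (x : Perm (Fin n)) (k : Fin n) (v : ℕ) :
    (x k : ℕ) < v ↔ rk x k v < rk x (k + 1) v := by
  rw [rk_succ]
  split_ifs with h <;> simp [h]

lemma eq_of_rk_eq {x z : Perm (Fin n)} (h : ∀ m v, rk x m v = rk z m v) : x = z := by
  have hlt : ∀ k v, (x k : ℕ) < v ↔ (z k : ℕ) < v := fun k v => by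
    rw [lt_iff_rk_lt_rk_succ, lt_iff_rk_lt_rk_succ, h, h]
  ext k
  exact le_antisymm (Nat.le_of_lt_succ ((hlt k _).2 (Nat.lt_succ_self _)))
    (Nat.le_of_lt_succ ((hlt k _).1 (Nat.lt_succ_self _)))

lemma rk_eq_of_forall_lt_eq {x z : Perm (Fin n)} {i : ℕ} (h : ∀ k : Fin n, (k : ℕ) < i → x k = z k)
    {m : ℕ} (hm : m ≤ i) (v : ℕ) : rk x m v = rk z m v := by
  unfold rk
  congr 1
  ext k
  simp only [mem_filter, mem_univ, true_and, and_congr_right_iff]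
  intro hk
  rw [h k (by omega)]

lemma rk_add_rk (x : Perm (Fin n)) {m m' v v' : ℕ} (hm : m ≤ m') (hv : v ≤ v') :
    rk x m' v' + rk x m v =
      rk x m v' + rk x m' v + #{k : Fin n | m ≤ k ∧ (k : ℕ) < m' ∧ v ≤ x k ∧ (x k : ℕ) < v'} := by
  simp only [rk, card_filter, ← sum_add_distrib]
  refine sum_congr rfl fun k _ => ?_
  split_ifs <;> omega

end Rank

section Swap

variable {n : ℕ}

lemma sum_univ_eq_add_add_sum_erase_erase {α M : Type*} [Fintype α] [DecidableEq α]
    [AddCommMonoid M] (f : α → M) {p q : α} (hpq : p ≠ q) :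
    ∑ k, f k = f p + f q + ∑ k ∈ (univ.erase p).erase q, f k := by
  rw [← add_sum_erase _ _ (mem_univ p), ← add_sum_erase _ _ (mem_erase.2 ⟨hpq.symm, mem_univ q⟩),
    add_assoc]

lemma swap_mul_apply_of_ne (x : Perm (Fin n)) {p q k : Fin n} (hp : k ≠ p) (hq : k ≠ q) :
    (swap (x p) (x q) * x) k = x k :=
  swap_apply_of_ne_of_ne (x.injective.ne hp) (x.injective.ne hq)

lemma rk_swap_mul_add {x : Perm (Fin n)} {p q : Fin n} (hpq : p < q) (hx : x p < x q)
    (m v : ℕ) :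
    rk (swap (x p) (x q) * x) m v +
      (if (p : ℕ) < m ∧ m ≤ q ∧ (x p : ℕ) < v ∧ v ≤ x q then 1 else 0) = rk x m v := by
  simp only [rk, card_filter]
  rw [sum_univ_eq_add_add_sum_erase_erase _ hpq.ne, sum_univ_eq_add_add_sum_erase_erase _ hpq.ne,
    sum_congr rfl fun k hk => by
      rw [swap_mul_apply_of_ne x (ne_of_mem_erase (mem_of_mem_erase hk)) (ne_of_mem_erase hk)]]
  simp only [Perm.mul_apply, swap_apply_left, swap_apply_right]
  split_ifs <;> omega

lemma rk_swap_mul_le {x : Perm (Fin n)} {p q : Fin n} (hpq : p < q) (hx : x p < x q)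
    (m v : ℕ) : rk (swap (x p) (x q) * x) m v ≤ rk x m v :=
  (Nat.le_add_right _ _).trans (rk_swap_mul_add hpq hx m v).le

lemma rk_swap_mul_eq {x : Perm (Fin n)} {p q : Fin n} (hpq : p < q) (hx : x p < x q)
    {m v : ℕ} (h : ¬ ((p : ℕ) < m ∧ m ≤ q ∧ (x p : ℕ) < v ∧ v ≤ x q)) :
    rk (swap (x p) (x q) * x) m v = rk x m v := by
  simpa only [if_neg h, add_zero] using rk_swap_mul_add hpq hx m v

lemma rk_swap_mul_apply_add {x : Perm (Fin n)} {p q : Fin n} (hpq : p < q) (hx : x p < x q)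
    {l : Fin n} (hlq : l ≠ q) :
    rk (swap (x p) (x q) * x) l (x l) +
      (if p < l ∧ l < q ∧ x p < x l ∧ x l < x q then 1 else 0) = rk x l (x l) := by
  have := Fin.val_ne_of_ne hlq
  have := Fin.val_ne_of_ne (x.injective.ne hlq)
  have h := rk_swap_mul_add hpq hx l (x l)
  split_ifs at h ⊢ <;> omega

end Swap

section Inversions

variable {n : ℕ}

/-- Position `l` contributes the number of earlier positions holding a larger value
(the subtraction never truncates, by `rk_le`). -/
def invCount (x : Perm (Fin n)) : ℕ := ∑ l : Fin n, ((l : ℕ) - rk x l (x l))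

lemma card_rect_eq_card_add_one {x : Perm (Fin n)} {p q : Fin n} (hpq : p < q) (hx : x p < x q) :
    #{k : Fin n | (p : ℕ) ≤ k ∧ (k : ℕ) < q ∧ (x p : ℕ) ≤ x k ∧ (x k : ℕ) < x q} =
      #{l | p < l ∧ l < q ∧ x p < x l ∧ x l < x q} + 1 := by
  rw [← card_insert_of_notMem (a := p) (by simp)]
  congr 1
  ext k
  simp only [mem_filter, mem_univ, true_and, mem_insert]
  constructor
  · rintro ⟨h1, h2, h3, h4⟩
    by_cases hkp : k = p
    · exact .inl hkp
    · have := Fin.val_ne_of_ne hkp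
      have := Fin.val_ne_of_ne (x.injective.ne hkp)
      exact .inr ⟨by omega, by omega, by omega, by omega⟩
  · rintro (rfl | ⟨h1, h2, h3, h4⟩)
    · exact ⟨le_rfl, hpq, le_rfl, hx⟩
    · exact ⟨by omega, by omega, by omega, by omega⟩

lemma invCount_swap_mul {x : Perm (Fin n)} {p q : Fin n} (hpq : p < q) (hx : x p < x q) :
    invCount (swap (x p) (x q) * x) =
      invCount x + 2 * #{l | p < l ∧ l < q ∧ x p < x l ∧ x l < x q} + 1 := by
  have hoff : ∀ l ∈ (univ.erase p).erase q,
      (l : ℕ) - rk (swap (x p) (x q) * x) l ((swap (x p) (x q) * x) l) =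
        ((l : ℕ) - rk x l (x l)) + if p < l ∧ l < q ∧ x p < x l ∧ x l < x q then 1 else 0 := by
    intro l hl
    have hlq : l ≠ q := ne_of_mem_erase hl
    have := rk_swap_mul_apply_add hpq hx hlq
    have := rk_le x l (x l)
    rw [swap_mul_apply_of_ne x (ne_of_mem_erase (mem_of_mem_erase hl)) hlq]
    split_ifs at * <;> omega
  have hcount : ∑ l ∈ (univ.erase p).erase q,
      (if p < l ∧ l < q ∧ x p < x l ∧ x l < x q then 1 else 0) =
        #{l | p < l ∧ l < q ∧ x p < x l ∧ x l < x q} := by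
    rw [card_filter, sum_univ_eq_add_add_sum_erase_erase _ hpq.ne]
    simp
  have hrect := rk_add_rk x (m := p) (m' := q) (v := x p) (v' := x q) hpq.le hx.le
  rw [card_rect_eq_card_add_one hpq hx] at hrect
  have hp := rk_swap_mul_eq (m := p) (v := x q) hpq hx (by omega)
  have hq := rk_swap_mul_eq (m := q) (v := x p) hpq hx (by omega)
  have := rk_le x p (x p)
  have := rk_le x p (x q)
  have := rk_le x q (x p)
  have := rk_le x q (x q)
  rw [invCount, invCount,
    sum_univ_eq_add_add_sum_erase_erase (fun l : Fin n => (l : ℕ) - rk x l (x l)) hpq.ne,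
    sum_univ_eq_add_add_sum_erase_erase _ hpq.ne, sum_congr rfl hoff, sum_add_distrib, hcount]
  simp only [Perm.mul_apply, swap_apply_left, swap_apply_right]
  omega

end Inversions

section Length

variable {n : ℕ}

lemma invCount_one : invCount (1 : Perm (Fin n)) = 0 := by
  refine sum_eq_zero fun l _ => ?_
  have : rk (1 : Perm (Fin n)) l ((1 : Perm (Fin n)) l) = l := by
    simp only [rk, Perm.one_apply, and_self, Fin.card_filter_val_lt]
    exact min_eq_right l.is_lt.le
  rw [this, Nat.sub_self]

lemma invCount_swap_mul_of_val_eq_succ {x : Perm (Fin n)} {p q : Fin n} (hpq : p < q)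
    (hx : (x q : ℕ) = x p + 1) : invCount (swap (x p) (x q) * x) = invCount x + 1 := by
  rw [invCount_swap_mul hpq (by omega), card_eq_zero.2 (filter_eq_empty_iff.2 fun l _ => by omega)]

lemma invCount_swap_mul_adjacent (x : Perm (Fin n)) {a b : Fin n} (hab : (b : ℕ) = a + 1) :
    invCount (swap a b * x) = invCount x + 1 ∨ invCount (swap a b * x) + 1 = invCount x := by
  obtain ⟨p, rfl⟩ := x.surjective a
  obtain ⟨q, rfl⟩ := x.surjective b
  rcases lt_or_gt_of_ne (show p ≠ q by rintro rfl; omega) with hpq | hqp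
  · exact .inl (invCount_swap_mul_of_val_eq_succ hpq hab)
  · right
    have h := invCount_swap_mul_of_val_eq_succ (x := swap (x p) (x q) * x) hqp
      (by simpa only [Perm.mul_apply, swap_apply_left, swap_apply_right] using hab)
    simp only [Perm.mul_apply, swap_apply_left, swap_apply_right] at h
    rw [swap_mul_self_mul] at h
    exact h.symm

lemma invCount_list_prod_le (l : List (Perm (Fin n))) (hl : ∀ s ∈ l, IsAdjTrans s) :
    invCount l.prod ≤ l.length := by
  induction l with
  | nil => simp [invCount_one]
  | cons s l ih =>
    obtain ⟨c, hc, rfl⟩ := hl s List.mem_cons_self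
    have := ih fun t ht => hl t (List.mem_cons_of_mem _ ht)
    have := invCount_swap_mul_adjacent l.prod (a := ⟨c, by omega⟩) (b := ⟨c + 1, hc⟩) rfl
    rw [List.prod_cons, List.length_cons]
    omega

lemma exists_descent {x : Perm (Fin n)} (hx : x ≠ 1) :
    ∃ (c : ℕ) (hc : c + 1 < n), x⁻¹ ⟨c + 1, hc⟩ < x⁻¹ ⟨c, by omega⟩ := by
  contrapose! hx
  cases n with
  | zero => exact Subsingleton.elim _ _
  | succ n =>
    have hmono : StrictMono ⇑x⁻¹ := Fin.strictMono_iff_lt_succ.2 fun i =>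
      (hx i i.succ.is_lt).lt_of_ne (x⁻¹.injective.ne Fin.castSucc_lt_succ.ne)
    rw [← inv_eq_one]
    exact DFunLike.coe_injective hmono.eq_id

lemma exists_list_adjTrans (x : Perm (Fin n)) :
    ∃ l : List (Perm (Fin n)), l.length = invCount x ∧ (∀ s ∈ l, IsAdjTrans s) ∧ l.prod = x := by
  induction h : invCount x using Nat.strong_induction_on generalizing x with
  | _ N ih =>
    by_cases hx : x = 1
    · subst hx
      exact ⟨[], by simp [← h, invCount_one], by simp, rfl⟩
    obtain ⟨c, hc, hdesc⟩ := exists_descent hx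
    set s := swap (⟨c, by omega⟩ : Fin n) ⟨c + 1, hc⟩
    have hsx : invCount (s * x) + 1 = invCount x := by
      have hp : (s * x) (x⁻¹ ⟨c + 1, hc⟩) = ⟨c, by omega⟩ := by simp [s]
      have hq : (s * x) (x⁻¹ ⟨c, by omega⟩) = ⟨c + 1, hc⟩ := by simp [s]
      have h := invCount_swap_mul_of_val_eq_succ hdesc (by rw [hp, hq])
      rwa [hp, hq, swap_mul_self_mul, eq_comm] at h
    obtain ⟨l, hl, hadj, hprod⟩ := ih _ (by omega) (s * x) rfl
    refine ⟨s :: l, by simp [hl]; omega, ?_, by rw [List.prod_cons, hprod, swap_mul_self_mul]⟩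
    intro t ht
    rcases List.mem_cons.1 ht with rfl | ht
    · exact ⟨c, hc, rfl⟩
    · exact hadj t ht

lemma permLength_eq_invCount (x : Perm (Fin n)) : permLength x = invCount x := by
  obtain ⟨l, hl, hadj, hprod⟩ := exists_list_adjTrans x
  refine le_antisymm (Nat.sInf_le ⟨l, hl, hadj, hprod⟩) (le_csInf ⟨_, l, hl, hadj, hprod⟩ ?_)
  rintro k ⟨l', rfl, hadj', rfl⟩
  exact invCount_list_prod_le l' hadj'

end Length

section Bruhat

variable {n : ℕ}

lemma invCount_le (x : Perm (Fin n)) : invCount x ≤ n * n := by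
  calc invCount x ≤ ∑ _l : Fin n, n := sum_le_sum fun l _ => (Nat.sub_le _ _).trans l.is_lt.le
    _ = n * n := by simp

lemma invCount_swap_mul_lt {x : Perm (Fin n)} {p q : Fin n} (hpq : p < q) (hx : x q < x p) :
    invCount (swap (x p) (x q) * x) < invCount x := by
  have h := invCount_swap_mul (x := swap (x p) (x q) * x) hpq
    (by simpa only [Perm.mul_apply, swap_apply_left, swap_apply_right] using hx)
  simp only [Perm.mul_apply, swap_apply_left, swap_apply_right] at h
  rw [swap_comm, swap_mul_self_mul] at h
  omega

lemma rk_le_and_invCount_lt_of_step {u v : Perm (Fin n)}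
    (h : ∃ t : Perm (Fin n), t.IsSwap ∧ v = t * u ∧ permLength u < permLength v) :
    (∀ m w, rk v m w ≤ rk u m w) ∧ invCount u < invCount v := by
  obtain ⟨t, ⟨a, b, hab, rfl⟩, rfl, hlen⟩ := h
  rw [permLength_eq_invCount, permLength_eq_invCount] at hlen
  refine ⟨?_, hlen⟩
  obtain ⟨p, rfl⟩ := u.surjective a
  obtain ⟨q, rfl⟩ := u.surjective b
  wlog hpq : p < q generalizing p q
  · rw [swap_comm] at hlen ⊢
    exact this q p hab.symm hlen ((not_lt.1 hpq).lt_of_ne (u.injective.ne_iff.1 hab).symm)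
  rcases lt_or_gt_of_ne hab with hx | hx
  · exact rk_swap_mul_le hpq hx
  · exact absurd hlen (invCount_swap_mul_lt hpq hx).not_gt

lemma rk_le_and_invCount_lt_of_bruhatLT {x z : Perm (Fin n)} (h : BruhatLT x z) :
    (∀ m w, rk z m w ≤ rk x m w) ∧ invCount x < invCount z := by
  induction h with
  | single h => exact rk_le_and_invCount_lt_of_step h
  | tail _ h ih =>
    obtain ⟨hrk, hinv⟩ := rk_le_and_invCount_lt_of_step h
    exact ⟨fun m w => (hrk m w).trans (ih.1 m w), ih.2.trans hinv⟩

lemma exists_forall_lt_eq_and_lt {x z : Perm (Fin n)} (hne : x ≠ z)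
    (hle : ∀ m v, rk z m v ≤ rk x m v) :
    ∃ i : Fin n, (∀ k : Fin n, (k : ℕ) < i → x k = z k) ∧ x i < z i := by
  obtain ⟨i₀, hi₀⟩ := DFunLike.ne_iff.1 hne
  obtain ⟨i, hi, hmin⟩ := exists_min_image {k | x k ≠ z k} id ⟨i₀, by simpa using hi₀⟩
  simp only [mem_filter, mem_univ, true_and, id] at hi hmin
  have hagree : ∀ k : Fin n, (k : ℕ) < i → x k = z k := fun k hk => by
    by_contra h
    exact absurd (hmin k h) (by omega)
  refine ⟨i, hagree, (lt_or_gt_of_ne hi).resolve_right fun h => ?_⟩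
  have hx := rk_succ x i (z i + 1)
  have hz := rk_succ z i (z i + 1)
  have := rk_eq_of_forall_lt_eq hagree le_rfl (z i + 1)
  have := hle (i + 1) (z i + 1)
  split_ifs at hx hz <;> omega

lemma rk_lt_rk_of_forall_lt_eq {x z : Perm (Fin n)} {i : Fin n}
    (hagree : ∀ k : Fin n, (k : ℕ) < i → x k = z k) (hle : ∀ m v, rk z m v ≤ rk x m v)
    {m v : ℕ} (him : (i : ℕ) < m) (hiv : (x i : ℕ) < v) (hvz : v ≤ z i)
    (hgap : ∀ l : Fin n, i < l → (l : ℕ) < m → x l ≤ x i ∨ z i < x l) :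
    rk z m v < rk x m v := by
  have hRx : #{l : Fin n | (i : ℕ) ≤ l ∧ (l : ℕ) < m ∧ v ≤ x l ∧ (x l : ℕ) < z i + 1} = 0 := by
    refine card_eq_zero.2 (filter_eq_empty_iff.2 fun l _ ⟨hil, hlm, hvl, hlz⟩ => ?_)
    rcases (show i ≤ l by omega).lt_or_eq with hil | rfl
    · have := hgap l hil hlm
      omega
    · omega
  have hRz : 0 < #{l : Fin n | (i : ℕ) ≤ l ∧ (l : ℕ) < m ∧ v ≤ z l ∧ (z l : ℕ) < z i + 1} :=
    card_pos.2 ⟨i, by simp only [mem_filter, mem_univ, true_and]; omega⟩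
  have hx := rk_add_rk x (m := i) (m' := m) (v := v) (v' := z i + 1) him.le (by omega)
  have hz := rk_add_rk z (m := i) (m' := m) (v := v) (v' := z i + 1) him.le (by omega)
  have := rk_eq_of_forall_lt_eq hagree le_rfl v
  have := rk_eq_of_forall_lt_eq hagree le_rfl (z i + 1)
  have := hle m (z i + 1)
  omega

/-- The step of the rank criterion: exchange the value at the first position `i` where `x` and
`z` differ with the value at the nearest later position holding a value in `(x i, z i]`. -/
lemma exists_swap_mul_rk_le {x z : Perm (Fin n)} (hne : x ≠ z)
    (hle : ∀ m v, rk z m v ≤ rk x m v) :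
    ∃ p q : Fin n, p < q ∧ x p < x q ∧ ∀ m v, rk z m v ≤ rk (swap (x p) (x q) * x) m v := by
  obtain ⟨i, hagree, hxz⟩ := exists_forall_lt_eq_and_lt hne hle
  set k := x⁻¹ (z i)
  have hxk : x k = z i := by simp [k]
  have hki : i < k := by
    refine lt_of_le_of_ne (not_lt.1 fun h => ?_) fun h => hxz.ne (h ▸ hxk)
    exact (z.injective ((hagree k h).symm.trans hxk)).not_lt h
  obtain ⟨j, hj, hjmin⟩ := exists_min_image {l | i < l ∧ x i < x l ∧ x l ≤ z i} id
    ⟨k, by simp [hki, hxk, hxz]⟩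
  simp only [mem_filter, mem_univ, true_and, id] at hj hjmin
  obtain ⟨hij, hxij, hxjz⟩ := hj
  refine ⟨i, j, hij, hxij, fun m v => ?_⟩
  have hswap := rk_swap_mul_add hij hxij m v
  split_ifs at hswap with hrect
  · obtain ⟨him, hmj, hiv, hvj⟩ := hrect
    have := rk_lt_rk_of_forall_lt_eq hagree hle him hiv (hvj.trans hxjz) fun l hil hlm => by
      by_contra! h
      exact absurd (hjmin l ⟨hil, h⟩) (by omega)
    omega
  · exact (hle m v).trans_eq hswap.symm

lemma bruhatLT_of_rk_le {x z : Perm (Fin n)} (hne : x ≠ z) (hle : ∀ m v, rk z m v ≤ rk x m v) :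
    BruhatLT x z := by
  induction h : n * n - invCount x using Nat.strong_induction_on generalizing x with
  | _ N ih =>
    obtain ⟨p, q, hpq, hx, hle'⟩ := exists_swap_mul_rk_le hne hle
    have hinv := invCount_swap_mul hpq hx
    have hstep : ∃ t : Perm (Fin n), t.IsSwap ∧ swap (x p) (x q) * x = t * x ∧
        permLength x < permLength (swap (x p) (x q) * x) :=
      ⟨_, ⟨_, _, hx.ne, rfl⟩, rfl, by rw [permLength_eq_invCount, permLength_eq_invCount]; omega⟩
    by_cases hz : swap (x p) (x q) * x = z
    · exact hz ▸ .single hstep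
    · have := invCount_le (swap (x p) (x q) * x)
      exact .head hstep (ih _ (by omega) hz hle' rfl)

theorem bruhatLT_iff_rk_le {x z : Perm (Fin n)} :
    BruhatLT x z ↔ x ≠ z ∧ ∀ m v, rk z m v ≤ rk x m v := by
  refine ⟨fun h => ?_, fun h => bruhatLT_of_rk_le h.1 h.2⟩
  obtain ⟨hrk, hinv⟩ := rk_le_and_invCount_lt_of_bruhatLT h
  exact ⟨by rintro rfl; exact hinv.false, hrk⟩

end Bruhat

section BlockInterpolation

variable {n : ℕ}

lemma rk_add_card (x : Perm (Fin n)) (m : ℕ) {v v' : ℕ} (hv : v ≤ v') :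
    rk x m v' = rk x m v + #{k : Fin n | (k : ℕ) < m ∧ v ≤ x k ∧ (x k : ℕ) < v'} := by
  simp only [rk, card_filter, ← sum_add_distrib]
  refine sum_congr rfl fun k _ => ?_
  split_ifs <;> omega

lemma card_filter_le_apply_lt (x : Perm (Fin n)) {L w : ℕ} (hLw : L ≤ w) (hw : w ≤ n) :
    #{k : Fin n | L ≤ x k ∧ (x k : ℕ) < w} = w - L := by
  have hx : #{k : Fin n | L ≤ x k ∧ (x k : ℕ) < w} = #{k : Fin n | L ≤ k ∧ (k : ℕ) < w} :=
    card_equiv x fun k => by simp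
  have hsplit : #{k : Fin n | (k : ℕ) < w} =
      #{k : Fin n | (k : ℕ) < L} + #{k : Fin n | L ≤ k ∧ (k : ℕ) < w} := by
    simp only [card_filter, ← sum_add_distrib]
    refine sum_congr rfl fun k _ => ?_
    split_ifs <;> omega
  rw [Fin.card_filter_val_lt, Fin.card_filter_val_lt] at hsplit
  omega

lemma rk_eq_min_of_increasing_on_block {x : Perm (Fin n)} {L w U : ℕ} (hLw : L ≤ w) (hwU : w ≤ U)
    (hw : w ≤ n)
    (hmono : ∀ k l : Fin n, k < l → L ≤ x k → (x k : ℕ) < U → L ≤ x l → (x l : ℕ) < U → x k < x l)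
    (m : ℕ) : rk x m w = min (rk x m U) (rk x m L + (w - L)) := by
  set A : Finset (Fin n) := {k | (k : ℕ) < m ∧ L ≤ x k ∧ (x k : ℕ) < U}
  set B : Finset (Fin n) := {k | L ≤ x k ∧ (x k : ℕ) < w}
  have hU : rk x m U = rk x m L + #A := rk_add_card x m (hLw.trans hwU)
  have hw' : rk x m w = rk x m L + #(A ∩ B) := by
    rw [rk_add_card x m hLw]
    congr 2
    ext k
    simp only [A, B, mem_filter, mem_inter, mem_univ, true_and]
    omega
  have hB : #B = w - L := card_filter_le_apply_lt x hLw hw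
  -- `A` and `B` are initial segments, in position order, of the positions holding values in
  -- `[L, U)`, since `x` is increasing there.
  have hAB : A ⊆ B ∨ B ⊆ A := by
    by_contra! h
    obtain ⟨⟨k, hkA, hkB⟩, ⟨l, hlB, hlA⟩⟩ := And.imp not_subset.1 not_subset.1 h
    simp only [A, B, mem_filter, mem_univ, true_and] at hkA hkB hlA hlB
    rcases lt_trichotomy k l with hkl | rfl | hlk
    · have := hmono k l hkl (by omega) (by omega) (by omega) (by omega)
      omega
    · omega
    · omega
  rcases hAB with h | h
  · rw [inter_eq_left.2 h] at hw'
    have := card_le_card h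
    omega
  · rw [inter_eq_right.2 h] at hw'
    have := card_le_card h
    omega

end BlockInterpolation

section Standardization

variable {α β γ : Partn} {n : ℕ} {e : Fin n → ℕ × ℕ}

lemma psum_mono (α : Partn) : Monotone (psum α) := fun _ _ h =>
  sum_le_sum_of_subset (range_subset_range.2 h)

lemma blockIdx_le_iff (hn : PartnOf α n) {v : ℕ} (hv : v < n) (u : ℕ) :
    blockIdx α v ≤ u ↔ v < psum α u := by
  obtain ⟨N, -, hN⟩ := hn
  have hmem : v < psum α (blockIdx α v) :=
    Nat.sInf_mem (s := {u | v < psum α u}) ⟨N, show v < psum α N by rwa [psum, hN]⟩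
  exact ⟨fun h => hmem.trans_le (psum_mono α h), fun h => Nat.sInf_le h⟩

lemma blockIdx_eq_succ (hn : PartnOf α n) {v u : ℕ} (hv : v < n) (hu : psum α u ≤ v)
    (hu' : v < psum α (u + 1)) : blockIdx α v = u + 1 :=
  le_antisymm ((blockIdx_le_iff hn hv _).2 hu') <|
    Nat.succ_le_of_lt <| lt_of_not_ge fun h => ((blockIdx_le_iff hn hv u).1 h).not_ge hu

lemma exists_psum_le_lt_psum_succ (hn : PartnOf α n) {v : ℕ} (hv : v < n) :
    ∃ u, psum α u ≤ v ∧ v < psum α (u + 1) := by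
  have hpos : blockIdx α v ≠ 0 := fun h => by
    simpa [psum] using (blockIdx_le_iff hn hv 0).1 h.le
  refine ⟨blockIdx α v - 1, not_lt.1 fun h => ?_, (blockIdx_le_iff hn hv _).1 (by omega)⟩
  have := (blockIdx_le_iff hn hv _).2 h
  omega

namespace IsStdOf

variable {F : SkFilling α β γ} {p : Perm (Fin n)}

lemma entry_le_iff (hn : PartnOf α n) (hp : IsStdOf α F e p) (k : Fin n) (u : ℕ) :
    F.entry (e k) ≤ u ↔ (p k : ℕ) < psum α u := by
  rw [← hp.1 k]
  exact blockIdx_le_iff hn (p k).is_lt u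

lemma rk_psum (hn : PartnOf α n) (hp : IsStdOf α F e p) (m u : ℕ) :
    rk p m (psum α u) = #{k : Fin n | (k : ℕ) < m ∧ F.entry (e k) ≤ u} := by
  simp only [rk, hp.entry_le_iff hn]

lemma apply_lt_apply_of_same_block (hn : PartnOf α n) (hp : IsStdOf α F e p) {u : ℕ}
    {k l : Fin n} (hkl : k < l)
    (hk : psum α u ≤ p k) (hk' : (p k : ℕ) < psum α (u + 1))
    (hl : psum α u ≤ p l) (hl' : (p l : ℕ) < psum α (u + 1)) : p k < p l :=
  hp.2 k l hkl <| by
    rw [← hp.1, ← hp.1, blockIdx_eq_succ hn (p k).is_lt hk hk',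
      blockIdx_eq_succ hn (p l).is_lt hl hl']

end IsStdOf

lemma rk_le_of_rk_psum_le (hn : PartnOf α n) {X Z : SkFilling α β γ} {px pz : Perm (Fin n)}
    (hpx : IsStdOf α X e px) (hpz : IsStdOf α Z e pz)
    (h : ∀ m u, rk pz m (psum α u) ≤ rk px m (psum α u)) (m w : ℕ) : rk pz m w ≤ rk px m w := by
  rcases le_or_gt n w with hw | hw
  · rw [rk_of_le _ hw, rk_of_le _ hw]
  obtain ⟨u, hu, hu'⟩ := exists_psum_le_lt_psum_succ hn hw
  rw [rk_eq_min_of_increasing_on_block hu hu'.le hw.le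
      (fun _ _ hkl => hpz.apply_lt_apply_of_same_block hn hkl) m,
    rk_eq_min_of_increasing_on_block hu hu'.le hw.le
      (fun _ _ hkl => hpx.apply_lt_apply_of_same_block hn hkl) m]
  exact min_le_min (h m (u + 1)) (Nat.add_le_add_right (h m u) _)

end Standardization

section Reading

variable {α β γ : Partn} {n : ℕ} {e : Fin n → ℕ × ℕ}

lemma exists_forall_lt_iff_val_lt {f : Fin n → ℕ} (hf : StrictMono f) (j : ℕ) :
    ∃ m : ℕ, ∀ k, f k < j ↔ (k : ℕ) < m := by
  by_cases h : ∃ k, j ≤ f k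
  · obtain ⟨k₀, hk₀⟩ := h
    obtain ⟨m, hm, hmin⟩ := exists_min_image {k | j ≤ f k} id ⟨k₀, by simpa using hk₀⟩
    simp only [mem_filter, mem_univ, true_and, id] at hm hmin
    refine ⟨m, fun k => ⟨fun hk => ?_, fun hk => ?_⟩⟩
    · exact lt_of_not_ge fun hmk => hk.not_ge (hm.trans (hf.monotone (Fin.le_def.2 hmk)))
    · exact lt_of_not_ge fun hjk => (hmin k hjk).not_gt hk
  · push Not at h
    exact ⟨n, fun k => ⟨fun _ => k.is_lt, fun _ => h k⟩⟩

lemma exists_forall_val_lt_iff_lt {f : Fin n → ℕ} (hf : StrictMono f) (m : ℕ) :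
    ∃ j, ∀ k : Fin n, (k : ℕ) < m ↔ f k < j := by
  by_cases hm : m < n
  · exact ⟨f ⟨m, hm⟩, fun k => (hf.lt_iff_lt (b := ⟨m, hm⟩)).symm⟩
  · exact ⟨∑ k, f k + 1, fun k =>
      ⟨fun _ => Nat.lt_succ_of_le (single_le_sum (by simp) (mem_univ k)), fun _ => by omega⟩⟩

lemma IsRowRead.strictMono_fst (he : IsRowRead β γ e) : StrictMono fun k => (e k).1 :=
  he.2.2.2

lemma IsRowRead.ncard_row (he : IsRowRead β γ e) (F : SkFilling α β γ) (u i : ℕ) :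
    Set.ncard {j | (i, j) ∈ SkewCells β γ ∧ F.entry (i, j) ≤ u} =
      #{k : Fin n | (e k).1 = i ∧ F.entry (e k) ≤ u} := by
  have himage : {j | (i, j) ∈ SkewCells β γ ∧ F.entry (i, j) ≤ u} =
      (fun k => (e k).2) '' ↑({k : Fin n | (e k).1 = i ∧ F.entry (e k) ≤ u} : Finset (Fin n)) := by
    ext j
    simp only [Set.mem_ofPred_eq, coe_filter, mem_univ, true_and, Set.mem_image]
    constructor
    · rintro ⟨hc, hu⟩
      obtain ⟨k, hk⟩ := he.2.2.1 _ hc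
      exact ⟨k, ⟨by rw [hk], by rwa [hk]⟩, by rw [hk]⟩
    · rintro ⟨k, ⟨rfl, hu⟩, rfl⟩
      exact ⟨he.1 k, hu⟩
  rw [himage, Set.InjOn.ncard_image, Set.ncard_coe_finset]
  intro k hk l hl hkl
  simp only [coe_filter, mem_univ, true_and, Set.mem_ofPred_eq] at hk hl
  exact he.2.1 (Prod.ext (hk.1.trans hl.1.symm) hkl)

lemma IsRowRead.sum_regionRow (he : IsRowRead β γ e) (F : SkFilling α β γ) (u j : ℕ) :
    ∑ i ∈ range j, regionRow F u i =
      ∑ i ∈ range j, γ.f i + #{k : Fin n | (e k).1 < j ∧ F.entry (e k) ≤ u} := by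
  simp only [regionRow, sum_add_distrib, he.ncard_row]
  congr 1
  rw [card_eq_sum_card_fiberwise (f := fun k => (e k).1) (t := range j) fun k hk => by simp_all]
  refine sum_congr rfl fun i hi => congr_arg card ?_
  ext k
  simp only [mem_filter, mem_univ, true_and, mem_range] at hi ⊢
  constructor
  · rintro ⟨hk, hu⟩
    exact ⟨⟨hk ▸ hi, hu⟩, hk⟩
  · rintro ⟨⟨-, hu⟩, hk⟩
    exact ⟨hk, hu⟩

lemma IsRowRead.domLE_iff (he : IsRowRead β γ e) {X Z : SkFilling α β γ} :
    DomLE Z X ↔ ∀ u m : ℕ, #{k : Fin n | (k : ℕ) < m ∧ Z.entry (e k) ≤ u} ≤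
      #{k : Fin n | (k : ℕ) < m ∧ X.entry (e k) ≤ u} := by
  simp only [DomLE, he.sum_regionRow, add_le_add_iff_left]
  constructor
  · intro h u m
    obtain ⟨j, hj⟩ := exists_forall_val_lt_iff_lt he.strictMono_fst m
    simpa only [hj] using h u j
  · intro h u j
    obtain ⟨m, hm⟩ := exists_forall_lt_iff_val_lt he.strictMono_fst j
    simpa only [hm] using h u m

end Reading

section Main

variable {α β γ : Partn} {n : ℕ} {e : Fin n → ℕ × ℕ}

theorem domLE_iff_rk_le (hn : PartnOf α n) (he : IsRowRead β γ e) {X Z : SkFilling α β γ}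
    {px pz : Perm (Fin n)} (hpz : IsStdOf α Z e pz) (hpx : IsStdOf α X e px) :
    DomLE Z X ↔ ∀ m w, rk pz m w ≤ rk px m w := by
  simp only [he.domLE_iff, ← hpz.rk_psum hn, ← hpx.rk_psum hn]
  exact ⟨fun h => rk_le_of_rk_psum_le hn hpx hpz fun m u => h u m, fun h u m => h m _⟩

attribute [ext] SkFilling

theorem filling_eq_iff_perm_eq (hn : PartnOf α n) (he : IsRowRead β γ e) {X Z : SkFilling α β γ}
    {px pz : Perm (Fin n)} (hpz : IsStdOf α Z e pz) (hpx : IsStdOf α X e px) :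
    Z = X ↔ pz = px := by
  constructor
  · rintro rfl
    have hdom : DomLE Z Z := fun _ _ => le_rfl
    exact eq_of_rk_eq fun m w => le_antisymm ((domLE_iff_rk_le hn he hpz hpx).1 hdom m w)
      ((domLE_iff_rk_le hn he hpx hpz).1 hdom m w)
  · rintro rfl
    ext c
    by_cases hc : c ∈ SkewCells β γ
    · obtain ⟨k, rfl⟩ := he.2.2.1 c hc
      rw [← hpz.1 k, ← hpx.1 k]
    · rw [Z.zero_outside c hc, X.zero_outside c hc]

end Main

theorem stmt7_general (n : ℕ) (α β γ : Partn)
    (hn : PartnOf α n) (e : Fin n → ℕ × ℕ) (he : IsRowRead β γ e)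
    (X Z : SkFilling α β γ) (px pz : Perm (Fin n))
    (hpx : IsStdOf α X e px) (hpz : IsStdOf α Z e pz) :
    (DomLE Z X ∧ Z ≠ X) ↔ BruhatLT px pz := by
  rw [bruhatLT_iff_rk_le, domLE_iff_rk_le hn he hpz hpx, Ne, filling_eq_iff_perm_eq hn he hpz hpx,
    and_comm, ne_comm]

/-- for fillings of a rook strip, `Z <_dom X` iff
`π(X) < π(Z)` in the Bruhat order. -/
theorem stmt7 (n : ℕ) (α β γ : Partn) (hsub : PartnSub γ β) (hrook : RookStrip β γ)
    (hn : PartnOf α n) (e : Fin n → ℕ × ℕ) (he : IsRowRead β γ e)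
    (X Z : SkFilling α β γ) (px pz : Perm (Fin n))
    (hpx : IsStdOf α X e px) (hpz : IsStdOf α Z e pz) :
    (DomLE Z X ∧ Z ≠ X) ↔ BruhatLT px pz :=
  stmt7_general n α β γ hn e he X Z px pz hpx hpz
end
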